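/- arXiv:1907.09134 — 13 statements merged into one kernel-verified Lean document; each statement's English description precedes it below -/
import Mathlib

section
/- Let K be a number field of degree n > 1 and let k be the positive integer such that the image of the trace map tr_{K/ℚ} on the ring of integers O_K equals kℤ. Then the determinant of the trace pairing restricted to the trace-zero submodule O_K^0 = {x ∈ O_K : tr(x) = 0} equals (n/k²)·Disc(K). -/
/-! Pick `x ∈ 𝓞 K` with `tr x = k`. As `k` divides every trace, `𝓞 K = ℤ x ⊕ 𝓞 K⁰`, so `x`
followed by a basis `b` of `𝓞 K⁰` is an integral basis, of discriminant `Disc(K)`. Comparing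
with the family `(k, b)` in two ways gives `k² n · det = n² Disc(K)`: the element `k - n x`
lies in `𝓞 K⁰`, so `(k, b)` arises from `(x, b)` by a triangular matrix of determinant `n`;
and `k` is trace-orthogonal to `𝓞 K⁰`, so the Gram matrix of `(k, b)` is block diagonal with
corner `tr (k²) = k² n`. -/

open NumberField Matrix

namespace Algebra

variable {A B : Type*} [CommRing A] [CommRing B] [Algebra A B] {m : ℕ}

theorem discr_cons_of_trace_mul_eq_zero (a : B) (v : Fin m → B)
    (h : ∀ j, trace A B (v j * a) = 0) :
    discr A (Fin.cons a v : Fin (m + 1) → B) = trace A B (a * a) * discr A v := by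
  rw [discr_def, discr_def, det_succ_column_zero, Fin.sum_univ_succ]
  simp only [Fin.val_zero, pow_zero, one_mul, traceMatrix_apply, traceForm_apply, Fin.cons_zero,
    Fin.succAbove_zero, Fin.val_succ, Fin.cons_succ, h, mul_zero, zero_mul, Finset.sum_const_zero,
    add_zero]
  rfl

theorem discr_cons_smul_add_sum (r : A) (c : Fin m → A) (a : B) (v : Fin m → B) :
    discr A (Fin.cons (r • a + ∑ j, c j • v j) v : Fin (m + 1) → B) =
      r ^ 2 * discr A (Fin.cons a v : Fin (m + 1) → B) := by
  let P : Matrix (Fin (m + 1)) (Fin (m + 1)) A := (1 : Matrix _ _ A).updateRow 0 (Fin.cons r c)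
  have hP : P.det = r := by
    rw [det_of_isUpperTriangular, Fin.prod_univ_succ]
    · simp [P]
    · intro i j hji
      have hi : i ≠ 0 := ((Fin.zero_le j).trans_lt hji).ne'
      simp only [P, updateRow_ne hi]
      exact one_apply_ne hji.ne'
  have hPv : P.map (algebraMap A B) *ᵥ Fin.cons a v = Fin.cons (r • a + ∑ j, c j • v j) v := by
    ext i
    cases i using Fin.cases with
    | zero => simp [P, mulVec, dotProduct, Fin.sum_univ_succ, Algebra.smul_def]
    | succ i => simp [P, mulVec, dotProduct, one_apply]
  rw [← hPv, discr_of_matrix_mulVec, hP]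

theorem trace_sq_mul_trace_one_mul_discr_ker (x : B)
    (b : Module.Basis (Fin m) A (LinearMap.ker (trace A B))) :
    trace A B x ^ 2 * trace A B 1 * discr A ((↑) ∘ b : Fin m → B) =
      trace A B 1 ^ 2 * discr A (Fin.cons x ((↑) ∘ b) : Fin (m + 1) → B) := by
  have hw : trace A B x • 1 - trace A B 1 • x ∈ LinearMap.ker (trace A B) := by
    rw [LinearMap.mem_ker, map_sub, map_smul, map_smul, smul_eq_mul, smul_eq_mul, mul_comm,
      sub_self]
  have hx_one : trace A B x • (1 : B) =
      trace A B 1 • x + ∑ j, b.repr ⟨_, hw⟩ j • ((↑) ∘ b : Fin m → B) j := by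
    have := congrArg Subtype.val (b.sum_repr ⟨_, hw⟩)
    simp only [AddSubmonoidClass.coe_finsetSum, SetLike.val_smul] at this
    rw [Function.comp_def, this]
    abel
  rw [← discr_cons_smul_add_sum, ← hx_one, discr_cons_of_trace_mul_eq_zero]
  · rw [smul_mul_smul, one_mul, map_smul, smul_eq_mul]
    ring
  · intro j
    rw [mul_smul_comm, mul_one, map_smul, Function.comp_apply, LinearMap.mem_ker.mp (b j).2,
      smul_zero]

end Algebra

namespace Module.Basis

variable {R M : Type*} [CommRing R] [IsDomain R] [AddCommGroup M] [Module R M] {m : ℕ}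

noncomputable def finConsKer (f : M →ₗ[R] R) (x : M) (hx : f x ≠ 0) (hdvd : ∀ y, f x ∣ f y)
    (b : Basis (Fin m) R (LinearMap.ker f)) : Basis (Fin (m + 1)) R M :=
  mkFinCons x b
    (fun c z hz hcz => by simpa [hx, LinearMap.mem_ker.mp hz] using congrArg f hcz)
    (fun z => by
      obtain ⟨d, hd⟩ := hdvd z
      exact ⟨-d, by simp [hd, mul_comm]⟩)

theorem coe_finConsKer (f : M →ₗ[R] R) (x : M) (hx : f x ≠ 0) (hdvd : ∀ y, f x ∣ f y)
    (b : Basis (Fin m) R (LinearMap.ker f)) :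
    (finConsKer f x hx hdvd b : Fin (m + 1) → M) = Fin.cons x ((↑) ∘ b) :=
  coe_mkFinCons ..

end Module.Basis

/-- The determinant of the trace pairing restricted to the trace-zero submodule
`O_K^0` equals `(n / k²) · Disc(K)`, where `tr_{K/ℚ}(O_K) = kℤ`. -/
theorem stmt_0 (K : Type*) [Field K] [NumberField K]
    (n : ℕ) (hn : 1 < n) (hdeg : Module.finrank ℚ K = n)
    (k : ℕ) (hk : 0 < k)
    (htr : LinearMap.range (Algebra.trace ℤ (𝓞 K)) = Ideal.span {(k : ℤ)})
    (b : Module.Basis (Fin (n - 1)) ℤ (LinearMap.ker (Algebra.trace ℤ (𝓞 K)))) :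
    (((Matrix.of fun i j =>
        Algebra.trace ℤ (𝓞 K) ((b i : 𝓞 K) * (b j : 𝓞 K))).det : ℤ) : ℚ)
      = (n : ℚ) / (k : ℚ) ^ 2 * (NumberField.discr K : ℚ) := by
  have hdvd (y : 𝓞 K) : (k : ℤ) ∣ Algebra.trace ℤ (𝓞 K) y :=
    Ideal.mem_span_singleton.mp (htr ▸ LinearMap.mem_range_self _ y)
  obtain ⟨x, hx⟩ : (k : ℤ) ∈ LinearMap.range (Algebra.trace ℤ (𝓞 K)) :=
    htr ▸ Ideal.mem_span_singleton_self _
  have htr_one : Algebra.trace ℤ (𝓞 K) 1 = n := by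
    rw [← map_one (algebraMap ℤ (𝓞 K)), Algebra.trace_algebraMap, RingOfIntegers.rank, hdeg,
      nsmul_one]
  have hdiscr : (k : ℤ) ^ 2 * n * (of fun i j => Algebra.trace ℤ (𝓞 K) (b i * b j)).det =
      n ^ 2 * discr K := by
    have := Algebra.trace_sq_mul_trace_one_mul_discr_ker x b
    rwa [hx, htr_one, ← Module.Basis.coe_finConsKer _ x (by rw [hx]; exact_mod_cast hk.ne')
      (hx ▸ hdvd), discr_eq_discr] at this
  generalize (of fun i j => Algebra.trace ℤ (𝓞 K) (b i * b j)).det = d at hdiscr ⊢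
  have hn0 : (n : ℚ) ≠ 0 := by exact_mod_cast (by omega : n ≠ 0)
  have hk0 : (k : ℚ) ≠ 0 := by exact_mod_cast hk.ne'
  have hq : (k : ℚ) ^ 2 * n * d = n ^ 2 * discr K := by exact_mod_cast hdiscr
  field_simp
  exact mul_left_cancel₀ hn0 (by linear_combination hq)
end

section
/- Let K be a number field of degree n > 1. Let O_K^⊥ = (ℤ + n·O_K) ∩ O_K^0 be the image of O_K under the projection α ↦ nα − tr_{K/ℚ}(α). Then the determinant of the trace pairing restricted to O_K^⊥ equals n^{2n−3}·Disc(K). -/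
/-!
Since `1` is primitive in `𝓞 K`, it extends to a `ℤ`-basis `e₀ = 1, e₁, …, e_{n-1}`. The vectors
`wᵢ = f eᵢ = n eᵢ - tr(eᵢ)` (`i ≥ 1`) give a family `(1, w₁, …, w_{n-1})` obtained from `e` by an
upper triangular matrix with diagonal `(1, n, …, n)`, so its discriminant is `n^{2(n-1)} Disc(K)`.
As the `wᵢ` have trace zero, `1` is trace-orthogonal to them and the same discriminant equals
`tr(1) · disc(w) = n · disc(w)`. Hence `disc(w) = n^{2n-3} Disc(K) ≠ 0`, so the `wᵢ` are independent;
they span `f(𝓞 K)` because `f 1 = 0`, and all `ℤ`-bases of a lattice have the same Gram determinant.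
-/

open NumberField Module Matrix

theorem Module.Basis.exists_fin_apply_zero_eq {R M : Type*} [CommRing R] [IsDomain R]
    [IsPrincipalIdealRing R] [AddCommGroup M] [Module R M] [Module.Free R M] [Module.Finite R M]
    {n : ℕ} (hn : finrank R M = n + 1) {x : M} (hx : ∀ (u : R) (y : M), u • y = x → IsUnit u) :
    ∃ e : Basis (Fin (n + 1)) R M, e 0 = x := by
  classical
  -- A Smith basis adapted to `R ∙ x` makes `x` a multiple of one basis vector of `M`, and
  -- primitivity makes the multiplier a unit.
  obtain ⟨k, snf⟩ := (R ∙ x).smithNormalForm (Module.Free.chooseBasis R M)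
  have hx0 : x ≠ 0 := fun h => not_isUnit_zero (hx 0 0 (by rw [h, zero_smul]))
  have hk : k = 1 := by
    have h := finrank_span_eq_card (b := fun _ : Unit => x)
      (linearIndependent_unique_iff (R := R).mpr hx0)
    rwa [Set.range_const, finrank_eq_card_basis snf.bN, Fintype.card_fin, Fintype.card_unit] at h
  subst hk
  obtain ⟨c, hc⟩ : ∃ c : R, c • (snf.bN 0 : M) = x := by
    have h := snf.bN.sum_repr ⟨x, Submodule.mem_span_singleton_self x⟩
    rw [Fin.sum_univ_one] at h
    exact ⟨_, congrArg Subtype.val h⟩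
  have hu : IsUnit (c * snf.a 0) := hx _ (snf.bM (snf.f 0)) (by rw [← smul_smul, ← snf.snf, hc])
  let e := snf.bM.unitsSMul (Function.update 1 (snf.f 0) hu.unit)
  have he : e (snf.f 0) = x := by
    simp [e, Basis.unitsSMul_apply, ← hc, snf.snf, smul_smul]
  have hcard : Fintype.card (Module.Free.ChooseBasisIndex R M) = n + 1 := by
    rw [← finrank_eq_card_chooseBasisIndex, hn]
  let g := (Fintype.equivFinOfCardEq hcard).trans
    (Equiv.swap (Fintype.equivFinOfCardEq hcard (snf.f 0)) 0)
  refine ⟨e.reindex g, ?_⟩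
  simp [g, he]

namespace Algebra

theorem isUnit_of_smul_eq_one {R A : Type*} [CommRing R] [CommRing A] [Nontrivial A]
    [Algebra R A] [Module.Free R A] [Module.Finite R A] {u : R} {y : A} (h : u • y = 1) :
    IsUnit u := by
  have : Nontrivial R := (algebraMap R A).domain_nontrivial
  have hr : finrank R A ≠ 0 := ((finrank_pos_iff_of_free R A).mpr ‹_›).ne'
  have hnorm := congrArg (Algebra.norm R) h
  rw [Algebra.smul_def, map_mul, Algebra.norm_algebraMap, map_one] at hnorm
  exact (isUnit_pow_iff hr).mp (.of_mul_eq_one _ hnorm)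

theorem discr_coe_basis_eq {ι A : Type*} [Fintype ι] [DecidableEq ι] [CommRing A]
    {N : Submodule ℤ A} (b b' : Basis ι ℤ N) :
    discr ℤ (fun i => (b i : A)) = discr ℤ (fun i => (b' i : A)) := by
  have hb : (fun i => (b i : A)) =
      (fun i => (b' i : A)) ᵥ* (b'.toMatrix b).map (algebraMap ℤ A) := by
    ext i
    simp only [vecMul, dotProduct, Matrix.map_apply, ← Algebra.commutes, ← Algebra.smul_def]
    conv_lhs => rw [← b'.sum_toMatrix_smul_self b i]
    simp only [Submodule.coe_sum, Submodule.coe_smul]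
  have hdet : IsUnit (b'.toMatrix b).det := by
    rw [← LinearMap.toMatrix_id_eq_basis_toMatrix b b']
    exact LinearEquiv.isUnit_det (LinearEquiv.refl ℤ N) b b'
  rw [hb, discr_of_matrix_vecMul, Int.isUnit_sq hdet, one_mul]

variable {R A : Type*} [CommRing R] [CommRing A] [Algebra R A]

theorem discr_fin_cons_of_trace_mul_eq_zero {m : ℕ} (x : A) (w : Fin m → A)
    (h : ∀ i, trace R A (x * w i) = 0) :
    discr R (Fin.cons x w : Fin (m + 1) → A) = trace R A (x * x) * discr R w := by
  have hsub : (traceMatrix R (Fin.cons x w)).submatrix Fin.succ Fin.succ = traceMatrix R w := rfl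
  rw [discr_def, det_succ_column_zero, Fin.sum_univ_succ]
  simp [traceMatrix_apply, mul_comm _ x, h, hsub, discr_def]

variable (R) in
noncomputable def traceProjection (n : ℕ) : A →ₗ[R] A :=
  n • LinearMap.id - (trace R A).smulRight 1

theorem traceProjection_apply (n : ℕ) (x : A) :
    traceProjection R n x = n • x - trace R A x • (1 : A) := rfl

section Rank

variable [StrongRankCondition R] [Module.Free R A]

theorem trace_one_eq_finrank : trace R A 1 = finrank R A := by
  rw [← map_one (algebraMap R A), trace_algebraMap, nsmul_one]

theorem trace_traceProjection {n : ℕ} (hn : finrank R A = n) (x : A) :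
    trace R A (traceProjection R n x) = 0 := by
  rw [← hn, traceProjection_apply, map_sub, map_nsmul, map_smul, trace_one_eq_finrank,
    smul_eq_mul, nsmul_eq_mul, mul_comm, sub_self]

theorem traceProjection_one {n : ℕ} (hn : finrank R A = n) :
    traceProjection R n (1 : A) = 0 := by
  rw [← hn, traceProjection_apply, trace_one_eq_finrank, Nat.cast_smul_eq_nsmul, sub_self]

end Rank

section Basis

variable {m : ℕ} (e : Basis (Fin (m + 1)) R A) (he : e 0 = 1)
include he

theorem repr_traceProjection (n : ℕ) (x : A) :
    e.repr (traceProjection R n x) = n • e.repr x - Finsupp.single 0 (trace R A x) := by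
  rw [traceProjection_apply, map_sub, map_nsmul, map_smul, ← he, e.repr_self,
    Finsupp.smul_single_one]

theorem det_toMatrix_cons_one_traceProjection (n : ℕ) :
    (e.toMatrix (Fin.cons 1 fun i => traceProjection R n (e i.succ))).det = n ^ m := by
  have h1 : e.repr 1 = Finsupp.single 0 1 := by rw [← he, e.repr_self]
  rw [det_of_isUpperTriangular, Fin.prod_univ_succ]
  · simp [Basis.toMatrix_apply, repr_traceProjection e he, h1, Fin.succ_ne_zero]
  · intro i j hij
    have hi : i ≠ 0 := (Fin.pos_iff_ne_zero' i).mp (lt_of_le_of_lt (Fin.zero_le j) hij)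
    induction j using Fin.cases with
    | zero => simp [Basis.toMatrix_apply, h1, hi.symm]
    | succ j =>
      have hji : j.succ ≠ i := hij.ne
      simp [Basis.toMatrix_apply, repr_traceProjection e he, hi.symm, hji]

theorem discr_cons_one_traceProjection (n : ℕ) :
    discr R (Fin.cons 1 fun i => traceProjection R n (e i.succ) : Fin (m + 1) → A) =
      (n : R) ^ (2 * m) * discr R e := by
  rw [← e.toMatrix_map_vecMul (Fin.cons 1 fun i => traceProjection R n (e i.succ)),
    discr_of_matrix_vecMul, det_toMatrix_cons_one_traceProjection e he, ← pow_mul, mul_comm m]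

variable [StrongRankCondition R]

theorem card_mul_discr_traceProjection :
    ((m + 1 : ℕ) : R) * discr R (fun i : Fin m => traceProjection R (m + 1) (e i.succ)) =
      ((m + 1 : ℕ) : R) ^ (2 * m) * discr R e := by
  have : Module.Free R A := .of_basis e
  have hrank : finrank R A = m + 1 := (finrank_eq_card_basis e).trans (Fintype.card_fin _)
  rw [← discr_cons_one_traceProjection e he, discr_fin_cons_of_trace_mul_eq_zero, one_mul,
    trace_one_eq_finrank, hrank]
  intro i
  rw [one_mul]
  exact trace_traceProjection hrank _

theorem span_traceProjection :
    Submodule.span R (Set.range fun i : Fin m => traceProjection R (m + 1) (e i.succ)) =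
      LinearMap.range (traceProjection R (m + 1) : A →ₗ[R] A) := by
  have : Module.Free R A := .of_basis e
  have h0 : traceProjection R (m + 1) (e 0) = 0 := by
    rw [he, traceProjection_one ((finrank_eq_card_basis e).trans (Fintype.card_fin _))]
  rw [LinearMap.range_eq_map, ← e.span_eq, Submodule.map_span, ← Set.range_comp,
    ← Fin.cons_self_tail (traceProjection R (m + 1) ∘ e), Fin.range_cons, Function.comp_apply, h0,
    Submodule.span_insert_zero]
  rfl

end Basis

end Algebra

/-- The determinant of the trace pairing restricted to
`O_K^⊥ = {nα − tr(α) : α ∈ O_K}` equals `n^(2n−3) · Disc(K)`. -/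
theorem stmt_1 (K : Type*) [Field K] [NumberField K]
    (n : ℕ) (hn : 1 < n) (hdeg : Module.finrank ℚ K = n)
    (f : 𝓞 K →ₗ[ℤ] 𝓞 K)
    (hf : ∀ x : 𝓞 K, f x = n • x - (Algebra.trace ℤ (𝓞 K) x) • (1 : 𝓞 K))
    (b : Module.Basis (Fin (n - 1)) ℤ (LinearMap.range f)) :
    (Matrix.of fun i j =>
        Algebra.trace ℤ (𝓞 K) ((b i : 𝓞 K) * (b j : 𝓞 K))).det
      = (n : ℤ) ^ (2 * n - 3) * NumberField.discr K := by
  obtain ⟨m, rfl⟩ : ∃ m, n = m + 1 := ⟨n - 1, by omega⟩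
  obtain rfl : f = Algebra.traceProjection ℤ (m + 1) :=
    LinearMap.ext fun x => (hf x).trans (Algebra.traceProjection_apply _ x).symm
  obtain ⟨e, he⟩ := Basis.exists_fin_apply_zero_eq ((RingOfIntegers.rank K).trans hdeg)
    fun _ _ h => Algebra.isUnit_of_smul_eq_one h
  set w := fun i : Fin m => Algebra.traceProjection ℤ (m + 1) (e i.succ)
  have hm : ((m + 1 : ℕ) : ℤ) ≠ 0 := by positivity
  have hdiscr : Algebra.discr ℤ w = ((m + 1 : ℕ) : ℤ) ^ (2 * m - 1) * discr K := by
    apply mul_left_cancel₀ hm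
    rw [Algebra.card_mul_discr_traceProjection e he, discr_eq_discr K e, ← mul_assoc, ← pow_succ',
      Nat.sub_add_cancel (by omega)]
  have hli : LinearIndependent ℤ w := by
    by_contra h
    exact mul_ne_zero (pow_ne_zero _ hm) (discr_ne_zero K)
      (hdiscr ▸ Algebra.discr_zero_of_not_linearIndependent ℤ h)
  let bw := (Basis.span hli).map (LinearEquiv.ofEq _ _ (Algebra.span_traceProjection e he))
  calc _ = Algebra.discr ℤ (fun i => (b i : 𝓞 K)) := rfl
    _ = Algebra.discr ℤ (fun i => (bw i : 𝓞 K)) := Algebra.discr_coe_basis_eq b bw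
    _ = Algebra.discr ℤ w := by simp [bw]
    _ = _ := by rw [hdiscr, show 2 * (m + 1) - 3 = 2 * m - 1 by omega]
end

section
/- Let K be a number field of degree n > 1, and let k be the positive integer generating the ideal tr_{K/ℚ}(O_K) ⊂ ℤ. Then the index of ℤ + O_K^0 in O_K equals n/k, and the index of ℤ + O_K^⊥ in O_K equals n^{n−1}. -/
/-!
The trace maps `ℤ + O_K^0` onto `nℤ`, has kernel `O_K^0` and image `kℤ`, so the first index
is `n / k`. For the second, `O_K / ℤ` is torsion-free of rank `n - 1` because `ℤ` is integrally
closed, and modulo `ℤ` the map `x ↦ n x - tr x` is multiplication by `n`; hence `ℤ + O_K^⊥`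
corresponds to `n (O_K / ℤ)`, of index `n ^ (n - 1)`.
-/

open NumberField

theorem Submodule.index_map_of_ker_le {R M M₂ : Type*} [Ring R] [AddCommGroup M]
    [AddCommGroup M₂] [Module R M] [Module R M₂] {f : M →ₗ[R] M₂} {p : Submodule R M}
    (hf : LinearMap.ker f ≤ p) :
    (p.map f).toAddSubgroup.index =
      p.toAddSubgroup.index * (LinearMap.range f).toAddSubgroup.index := by
  rw [Submodule.map_toAddSubgroup, AddSubgroup.index_map, sup_of_le_left (by exact hf)]
  rfl

theorem LinearMap.index_span_singleton_sup_ker {M : Type*} [AddCommGroup M] (φ : M →ₗ[ℤ] ℤ)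
    {k : ℕ} (hk : 0 < k) (hφ : LinearMap.range φ = Ideal.span {(k : ℤ)}) (x : M) :
    (Submodule.span ℤ {x} ⊔ LinearMap.ker φ).toAddSubgroup.index = (φ x).natAbs / k := by
  have hmap : (Submodule.span ℤ {x} ⊔ LinearMap.ker φ).map φ = Ideal.span {φ x} := by
    rw [Submodule.map_sup, Submodule.map_span, Set.image_singleton,
      LinearMap.le_ker_iff_map.mp le_rfl, sup_bot_eq, Ideal.span]
  have := Submodule.index_map_of_ker_le (f := φ) (le_sup_right : _ ≤ Submodule.span ℤ {x} ⊔ _)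
  rw [hmap, hφ] at this
  simp only [Ideal.span_singleton_toAddSubgroup_eq_zmultiples, Int.index_zmultiples,
    Int.natAbs_natCast] at this
  rw [this, Nat.mul_div_cancel _ hk]

theorem NumberField.RingOfIntegers.mem_span_one_of_zsmul_mem {K : Type*} [Field K] [CharZero K] {c : ℤ}
    (hc : c ≠ 0) {x : 𝓞 K} (h : c • x ∈ Submodule.span ℤ {1}) : x ∈ Submodule.span ℤ {1} := by
  obtain ⟨m, hm⟩ := Submodule.mem_span_singleton.mp h
  have hxK : algebraMap (𝓞 K) K x = algebraMap ℚ K (m / c) := by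
    have := congrArg (algebraMap (𝓞 K) K) hm
    simp only [zsmul_eq_mul, mul_one, map_mul, map_intCast] at this
    rw [map_div₀, map_intCast, map_intCast, eq_div_iff (by exact_mod_cast hc)]
    linear_combination -this
  obtain ⟨z, hz⟩ := IsIntegrallyClosed.isIntegral_iff.mp
    ((isIntegral_algebraMap_iff (algebraMap ℚ K).injective).mp (hxK ▸ x.isIntegral_coe))
  refine Submodule.mem_span_singleton.mpr ⟨z, RingOfIntegers.coe_injective ?_⟩
  rw [hxK, ← hz]
  simp

instance NumberField.RingOfIntegers.isTorsionFree_quotient_span_one {K : Type*} [Field K] [CharZero K] :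
    Module.IsTorsionFree ℤ (𝓞 K ⧸ Submodule.span ℤ {(1 : 𝓞 K)}) := by
  refine Module.isTorsionFree_iff_smul_eq_zero.mpr fun c y hy => ?_
  obtain ⟨x, rfl⟩ := Submodule.Quotient.mk_surjective _ y
  rw [← Submodule.Quotient.mk_smul, Submodule.Quotient.mk_eq_zero] at hy
  rw [or_iff_not_imp_left, Submodule.Quotient.mk_eq_zero]
  exact fun hc => RingOfIntegers.mem_span_one_of_zsmul_mem hc hy

theorem LinearMap.index_range_zsmul_id {M : Type*} [AddCommGroup M] [Module.Free ℤ M]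
    [Module.Finite ℤ M] {c : ℤ} (hc : c ≠ 0) :
    (LinearMap.range (c • LinearMap.id : M →ₗ[ℤ] M)).toAddSubgroup.index =
      c.natAbs ^ Module.finrank ℤ M := by
  set g : M →ₗ[ℤ] M := c • LinearMap.id
  have hg : Function.Injective g := smul_right_injective M hc
  let b := Module.finBasis ℤ M
  let snf : Module.Basis.SmithNormalForm (LinearMap.range g) _ (Module.finrank ℤ M) :=
    ⟨b, b.map (LinearEquiv.ofInjective g hg), Function.Embedding.refl _, fun _ => c, fun i => by
      simp [g]⟩
  rw [snf.toAddSubgroup_index_eq_pow_mul_prod]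
  simp [snf, Int.index_zmultiples]

theorem finrank_quotient_span_singleton {M : Type*} [AddCommGroup M]
    [Module.Finite ℤ M] [Module.IsTorsionFree ℤ M] {x : M} (hx : x ≠ 0) :
    Module.finrank ℤ (M ⧸ Submodule.span ℤ {x}) = Module.finrank ℤ M - 1 := by
  have h := (Submodule.span ℤ {x}).finrank_quotient_add_finrank
  rw [← (LinearEquiv.toSpanNonzeroSingleton ℤ M x hx).finrank_eq, Module.finrank_self] at h
  omega

/-- The index of `ℤ + O_K^0` in `O_K` equals `n/k` and the index of
`ℤ + O_K^⊥` in `O_K` equals `n^(n−1)`. -/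
theorem stmt_2 (K : Type*) [Field K] [NumberField K]
    (n : ℕ) (hn : 1 < n) (hdeg : Module.finrank ℚ K = n)
    (k : ℕ) (hk : 0 < k)
    (htr : LinearMap.range (Algebra.trace ℤ (𝓞 K)) = Ideal.span {(k : ℤ)})
    (f : 𝓞 K →ₗ[ℤ] 𝓞 K)
    (hf : ∀ x : 𝓞 K, f x = n • x - (Algebra.trace ℤ (𝓞 K) x) • (1 : 𝓞 K)) :
    (Submodule.span ℤ {(1 : 𝓞 K)} ⊔
        LinearMap.ker (Algebra.trace ℤ (𝓞 K))).toAddSubgroup.index = n / k ∧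
    (Submodule.span ℤ {(1 : 𝓞 K)} ⊔ LinearMap.range f).toAddSubgroup.index
      = n ^ (n - 1) := by
  have hrank : Module.finrank ℤ (𝓞 K) = n := by rw [RingOfIntegers.rank, hdeg]
  have htr_one : Algebra.trace ℤ (𝓞 K) 1 = n := by
    simpa [hrank] using Algebra.trace_algebraMap (S := 𝓞 K) (1 : ℤ)
  refine ⟨by simpa [htr_one] using (Algebra.trace ℤ (𝓞 K)).index_span_singleton_sup_ker hk htr 1,
    ?_⟩
  set S := Submodule.span ℤ {(1 : 𝓞 K)}
  set g : (𝓞 K ⧸ S) →ₗ[ℤ] (𝓞 K ⧸ S) := (n : ℤ) • LinearMap.id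
  have hcomm : S.mkQ ∘ₗ f = g ∘ₗ S.mkQ := by
    ext x
    have h1 : S.mkQ 1 = 0 :=
      (Submodule.Quotient.mk_eq_zero S).mpr (Submodule.mem_span_singleton_self 1)
    simp only [LinearMap.comp_apply, hf x, map_sub, map_nsmul, map_zsmul, h1, smul_zero, sub_zero,
      g, LinearMap.smul_apply, LinearMap.id_apply, natCast_zsmul]
  have hmap : (S ⊔ LinearMap.range f).map S.mkQ = LinearMap.range g := by
    rw [Submodule.map_sup, Submodule.mkQ_map_self, bot_sup_eq, ← LinearMap.range_comp, hcomm,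
      LinearMap.range_comp_of_range_eq_top _ (Submodule.range_mkQ S)]
  have hindex := Submodule.index_map_of_ker_le (f := S.mkQ) (p := S ⊔ LinearMap.range f)
    (by rw [Submodule.ker_mkQ]; exact le_sup_left)
  rwa [Submodule.range_mkQ, Submodule.top_toAddSubgroup, AddSubgroup.index_top, mul_one, hmap,
    LinearMap.index_range_zsmul_id (by omega), finrank_quotient_span_singleton one_ne_zero, hrank,
    Int.natAbs_natCast, eq_comm] at hindex
end

section
/- Let K be a number field with ring of integers O_K and different ideal D_{K/ℚ}, and let k be the positive integer such that tr_{K/ℚ}(O_K) = kℤ. Then for every rational prime p, the p-adic valuation of k equals the minimum over all primes 𝔭 of O_K above p of the floor of v_𝔭(D_{K/ℚ})/e(𝔭|p), where e(𝔭|p) is the ramification index. -/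
/-!
For every `n`, `p ^ n ∣ k` iff `p ^ n` divides every trace `tr(b)`, `b ∈ 𝓞 K`, iff the trace maps
`p⁻ⁿ 𝓞 K` into `ℤ`, i.e. `p⁻ⁿ 𝓞 K ⊆ 𝒟⁻¹`, i.e. `𝒟 ⊆ (p 𝓞 K) ^ n`. By unique factorization of ideals
and `p 𝓞 K = ∏_{𝔭 ∣ p} 𝔭 ^ e(𝔭|p)`, this says `n * e(𝔭|p) ≤ v_𝔭(𝒟)` for every `𝔭` above `p`.
Hence `v_p(k)` is the largest `n` below every `⌊v_𝔭(𝒟) / e(𝔭|p)⌋`.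
-/

open NumberField
open scoped Classical

open scoped nonZeroDivisors

theorem Nat.eq_sInf_div_of_forall_le_iff {ι : Type*} {s : Set ι} (hs : s.Nonempty)
    {e c : ι → ℕ} (he : ∀ i ∈ s, 0 < e i) {a : ℕ}
    (h : ∀ n, n ≤ a ↔ ∀ i ∈ s, n * e i ≤ c i) :
    a = sInf ((fun i => c i / e i) '' s) := by
  refine eq_of_forall_le_iff fun n => ?_
  rw [h, le_csInf_iff (OrderBot.bddBelow _) (hs.image _), Set.forall_mem_image]
  exact forall₂_congr fun i hi => (Nat.le_div_iff_mul_le (he i hi)).symm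

theorem Int.exists_intCast_eq_inv_mul_iff {a : ℤ} (ha : a ≠ 0) (t : ℤ) :
    (∃ y : ℤ, (y : ℚ) = (a : ℚ)⁻¹ * t) ↔ a ∣ t := by
  constructor
  · rintro ⟨y, hy⟩
    refine ⟨y, ?_⟩
    rw [eq_inv_mul_iff_mul_eq₀ (by exact_mod_cast ha)] at hy
    exact_mod_cast hy.symm
  · rintro ⟨c, rfl⟩
    exact ⟨c, by push_cast; field_simp⟩

theorem LinearMap.dvd_iff_forall_dvd_of_range_eq_span {R M : Type*} [CommRing R]
    [AddCommGroup M] [Module R M] {f : M →ₗ[R] R} {k : R}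
    (hf : LinearMap.range f = Ideal.span {k}) (d : R) :
    d ∣ k ↔ ∀ x, d ∣ f x := by
  have hmem (r : R) : r ∈ LinearMap.range f ↔ k ∣ r := by
    rw [hf, Ideal.mem_span_singleton]
  refine ⟨fun h x => h.trans ((hmem _).1 ⟨x, rfl⟩), fun h => ?_⟩
  obtain ⟨x, hx⟩ := (hmem k).2 dvd_rfl
  exact hx ▸ h x

open UniqueFactorizationMonoid in
theorem Ideal.le_pow_iff_forall_count_le {R : Type*} [CommRing R] [IsDedekindDomain R]
    {I J : Ideal R} (hI : I ≠ ⊥) (hJ : J ≠ ⊥) (n : ℕ) :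
    I ≤ J ^ n ↔ ∀ P, n * (normalizedFactors J).count P ≤ (normalizedFactors I).count P := by
  rw [← Ideal.dvd_iff_le, dvd_iff_normalizedFactors_le_normalizedFactors (pow_ne_zero _ hJ) hI,
    normalizedFactors_pow, Multiset.le_iff_count]
  simp only [Multiset.count_nsmul]

open UniqueFactorizationMonoid in
theorem Ideal.le_map_pow_iff_forall_mul_ramificationIdx'_le {R S : Type*} [CommRing R]
    [IsDomain R] [CommRing S] [IsDedekindDomain S] [Algebra R S] [Module.IsTorsionFree R S]
    {p : Ideal R} [p.IsMaximal] (hp : p ≠ ⊥) {I : Ideal S} (hI : I ≠ ⊥) (n : ℕ) :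
    I ≤ p.map (algebraMap R S) ^ n ↔
      ∀ P ∈ p.primesOver S, n * p.ramificationIdx' P ≤ (normalizedFactors I).count P := by
  have hpS : p.map (algebraMap R S) ≠ ⊥ := Ideal.map_ne_bot_of_ne_bot hp
  have he : ∀ P ∈ p.primesOver S,
      p.ramificationIdx' P = (normalizedFactors (p.map (algebraMap R S))).count P := fun P hP =>
    Ideal.IsDedekindDomain.ramificationIdx'_eq_normalizedFactors_count hpS hP.1
      (Ideal.ne_bot_of_mem_primesOver hp hP)
  rw [Ideal.le_pow_iff_forall_count_le hI hpS]
  refine ⟨fun h P hP => he P hP ▸ h P, fun h P => ?_⟩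
  by_cases hP : P ∈ p.primesOver S
  · exact he P hP ▸ h P hP
  · rw [mem_primesOver_iff_mem_normalizedFactors S hp, ← Multiset.count_eq_zero] at hP
    simp [hP]

theorem NumberField.differentIdeal_le_map_span_iff (K : Type*) [Field K] [NumberField K]
    {a : ℤ} (ha : a ≠ 0) :
    differentIdeal ℤ (𝓞 K) ≤ (Ideal.span {a}).map (algebraMap ℤ (𝓞 K)) ↔
      ∀ b : 𝓞 K, a ∣ Algebra.trace ℤ (𝓞 K) b := by
  have hI : (Ideal.span {a}).map (algebraMap ℤ (𝓞 K)) ≠ ⊥ :=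
    Ideal.map_ne_bot_of_ne_bot (by simpa using ha)
  have hinv : (((Ideal.span {a}).map (algebraMap ℤ (𝓞 K)) : Ideal (𝓞 K)) :
      FractionalIdeal (𝓞 K)⁰ K)⁻¹ = FractionalIdeal.spanSingleton (𝓞 K)⁰ (a : K)⁻¹ := by
    rw [Ideal.map_span, Set.image_singleton, FractionalIdeal.coeIdeal_span_singleton,
      FractionalIdeal.spanSingleton_inv]
    simp
  have htrace (b : 𝓞 K) : Algebra.trace ℚ K (b • (a : K)⁻¹) =
      (a : ℚ)⁻¹ * Algebra.trace ℤ (𝓞 K) b := by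
    have : b • (a : K)⁻¹ = (a : ℚ)⁻¹ • (b : K) := by
      rw [Algebra.smul_def, Algebra.smul_def, mul_comm]
      simp
    rw [this, map_smul, smul_eq_mul, Algebra.coe_trace_int]
  rw [differentialIdeal_le_iff (K := ℚ) (L := K) hI, hinv, FractionalIdeal.coe_spanSingleton,
    Submodule.map_le_iff_le_comap, SetLike.le_def]
  simp only [Submodule.restrictScalars_mem, Submodule.mem_span_singleton, forall_exists_index,
    forall_apply_eq_imp_iff, Submodule.mem_comap, LinearMap.coe_restrictScalars, htrace,
    Submodule.mem_one, algebraMap_int_eq, eq_intCast, Int.exists_intCast_eq_inv_mul_iff ha]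

/-- The `p`-adic valuation of the generator `k` of `tr_{K/ℚ}(O_K)` equals the minimum,
over the primes `𝔭` of `O_K` above `p`, of `⌊v_𝔭(𝒟_{K/ℚ}) / e(𝔭|p)⌋`. -/
theorem stmt_3 (K : Type*) [Field K] [NumberField K]
    (k : ℕ) (hk : 0 < k)
    (htr : LinearMap.range (Algebra.trace ℤ (𝓞 K)) = Ideal.span {(k : ℤ)})
    (p : ℕ) (hp : p.Prime) :
    padicValNat p k =
      sInf { m : ℕ | ∃ P : Ideal (𝓞 K), P.IsPrime ∧
        Ideal.comap (algebraMap ℤ (𝓞 K)) P = Ideal.span {(p : ℤ)} ∧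
        m = (UniqueFactorizationMonoid.normalizedFactors
              (differentIdeal ℤ (𝓞 K))).count P /
            Ideal.ramificationIdx' (Ideal.span {(p : ℤ)}) P } := by
  have : Fact p.Prime := ⟨hp⟩
  set pZ := Ideal.span {(p : ℤ)}
  have hp0 : pZ ≠ ⊥ := by simpa [pZ] using hp.ne_zero
  have hne : (pZ.primesOver (𝓞 K)).Nonempty := ⟨_, (Ideal.nonempty_primesOver pZ).some.2⟩
  have he (P) (hP : P ∈ pZ.primesOver (𝓞 K)) : 0 < pZ.ramificationIdx' P :=
    have := hP.1; have := hP.2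
    Nat.pos_of_ne_zero (Ideal.IsDedekindDomain.ramificationIdx'_ne_zero_of_liesOver P hp0)
  have hle (n : ℕ) : n ≤ padicValNat p k ↔ ∀ P ∈ pZ.primesOver (𝓞 K),
      n * pZ.ramificationIdx' P ≤
        (UniqueFactorizationMonoid.normalizedFactors (differentIdeal ℤ (𝓞 K))).count P := by
    rw [← padicValNat_dvd_iff_le hk.ne', ← Int.natCast_dvd_natCast,
      LinearMap.dvd_iff_forall_dvd_of_range_eq_span htr, Nat.cast_pow,
      ← NumberField.differentIdeal_le_map_span_iff K (pow_ne_zero _ (by exact_mod_cast hp.ne_zero)),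
      ← Ideal.span_singleton_pow, Ideal.map_pow,
      Ideal.le_map_pow_iff_forall_mul_ramificationIdx'_le hp0 differentIdeal_ne_bot]
  convert Nat.eq_sInf_div_of_forall_le_iff hne he hle using 2
  ext m
  simp [Ideal.primesOver, Ideal.liesOver_iff, Ideal.under_def, eq_comm, and_assoc]
end

section
/- (Maurer) Let K be a number field and let k be the positive integer such that tr_{K/ℚ}(O_K) = kℤ. A rational prime p divides k if and only if p divides the ramification index e(𝔭|p) for every prime 𝔭 of O_K lying over p. -/
/-!
Reducing mod `p`, `tr_{O_K/ℤ}(x) mod p` is the trace of `x̄` on `O_K/pO_K` over `𝔽_p`, so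
`p ∣ k` iff this trace form vanishes. By the Chinese remainder theorem
`O_K/pO_K ≅ ∏_𝔭 O_K/𝔭^{e_𝔭}`, and the trace form of a product vanishes iff it vanishes on
each factor. The filtration of `O_K/𝔭^e` by the ideals `𝔭^i/𝔭^e` has `e` successive
quotients, each isomorphic to `O_K/𝔭`, so the trace of `x̄` on `O_K/𝔭^e` is
`e · tr_{(O_K/𝔭)/𝔽_p}(x̄)`. The residue field extension is separable, so its trace is onto
`𝔽_p`, and the trace form of `O_K/𝔭^e` vanishes iff `p ∣ e`.
-/

open Ideal

theorem LinearMap.trace_eq_of_intertwines {R M N : Type*} [CommRing R] [AddCommGroup M]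
    [Module R M] [AddCommGroup N] [Module R N] (e : M ≃ₗ[R] N) {f : M →ₗ[R] M}
    {g : N →ₗ[R] N} (h : ∀ m, e (f m) = g (e m)) : trace R M f = trace R N g := by
  rw [← trace_conj' f e]
  congr 1
  ext n
  simp [LinearEquiv.conj_apply, h]

/-- In a basis of `V` extending one of `W`, the matrix of `f` is block upper triangular. -/
theorem LinearMap.trace_eq_trace_restrict_add_trace_mapQ {R V : Type*} [CommRing R]
    [AddCommGroup V] [Module R V] (W : Submodule R V) [Module.Free R W] [Module.Finite R W]
    [Module.Free R (V ⧸ W)] [Module.Finite R (V ⧸ W)] (f : V →ₗ[R] V)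
    (hf : W ≤ W.comap f) :
    trace R V f = trace R W (f.restrict hf) + trace R (V ⧸ W) (W.mapQ W f hf) := by
  let bW := Module.Free.chooseBasis R W
  let bQ := Module.Free.chooseBasis R (V ⧸ W)
  rw [trace_eq_matrix_trace R (bW.sumQuot bQ), trace_eq_matrix_trace R bW,
    trace_eq_matrix_trace R bQ]
  simp only [Matrix.trace, Matrix.diag, Fintype.sum_sum_type, toMatrix_apply]
  congr 1
  · refine Finset.sum_congr rfl fun i _ => ?_
    rw [Module.Basis.sumQuot_inl,
      Module.Basis.sumQuot_repr_inl_of_mem bW bQ (f (bW i)) (hf (bW i).2)]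
    rfl
  · refine Finset.sum_congr rfl fun j _ => ?_
    rw [Module.Basis.sumQuot_repr_inr, ← Module.Basis.sumQuot_inr bW bQ j]
    rfl

theorem Algebra.trace_pi {R ι : Type*} [CommRing R] [Fintype ι] (A : ι → Type*)
    [∀ i, CommRing (A i)] [∀ i, Algebra R (A i)] [∀ i, Module.Free R (A i)]
    [∀ i, Module.Finite R (A i)] (x : ∀ i, A i) :
    Algebra.trace R (∀ i, A i) x = ∑ i, Algebra.trace R (A i) (x i) := by
  classical
  let b i := Module.Free.chooseBasis R (A i)
  rw [Algebra.trace_eq_matrix_trace (Pi.basis b), Matrix.trace, ← Finset.univ_sigma_univ,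
    Finset.sum_sigma]
  refine Finset.sum_congr rfl fun i _ => ?_
  rw [Algebra.trace_eq_matrix_trace (b i), Matrix.trace]
  refine Finset.sum_congr rfl fun j _ => ?_
  simp [Algebra.leftMulMatrix_eq_repr_mul]

theorem Algebra.trace_pi_eq_zero_iff {R ι : Type*} [CommRing R] [Fintype ι] (A : ι → Type*)
    [∀ i, CommRing (A i)] [∀ i, Algebra R (A i)] [∀ i, Module.Free R (A i)]
    [∀ i, Module.Finite R (A i)] :
    Algebra.trace R (∀ i, A i) = 0 ↔ ∀ i, Algebra.trace R (A i) = 0 := by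
  classical
  simp only [LinearMap.ext_iff, LinearMap.zero_apply, Algebra.trace_pi]
  refine ⟨fun h i y => ?_, fun h x => Finset.sum_eq_zero fun i _ => h i (x i)⟩
  have := h (Pi.single i y)
  rwa [Fintype.sum_eq_single i fun j hj => by rw [Pi.single_eq_of_ne hj, map_zero],
    Pi.single_eq_same] at this

theorem LinearMap.dvd_iff_forall_dvd_of_range_eq_span_singleton {R M : Type*} [CommRing R]
    [AddCommGroup M] [Module R M] (f : M →ₗ[R] R) {a b : R}
    (hf : LinearMap.range f = Ideal.span {a}) : b ∣ a ↔ ∀ m, b ∣ f m := by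
  rw [← Ideal.span_singleton_le_span_singleton, ← hf]
  simp only [SetLike.le_def, LinearMap.mem_range, forall_exists_index, forall_apply_eq_imp_iff,
    Ideal.mem_span_singleton]

section RamificationIdx

attribute [local instance] Ideal.Quotient.field
  Ideal.Quotient.algebraQuotientOfRamificationIdxNeZero

section QuotientPow

variable {R S : Type*} [CommRing R] [CommRing S] [Algebra R S] [IsDedekindDomain S]
  (p : Ideal R) [p.IsMaximal] (P : Ideal S) [P.IsPrime] [NeZero (ramificationIdx' p P)]
  [Module.Finite (R ⧸ p) (S ⧸ P ^ ramificationIdx' p P)]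

local notation "e" => ramificationIdx' p P
local notation "J" i => map (Ideal.Quotient.mk (P ^ e)) (P ^ i)

theorem Ideal.trace_smul_powQuot_eq_add (hP0 : P ≠ ⊥) (x : S) {i : ℕ} (hi : i < e) :
    LinearMap.trace (R ⧸ p) (J i)
        (DistribSMul.toLinearMap (R ⧸ p) (J i) (Ideal.Quotient.mk (P ^ e) x)) =
      LinearMap.trace (R ⧸ p) (J (i + 1))
          (DistribSMul.toLinearMap (R ⧸ p) (J (i + 1)) (Ideal.Quotient.mk (P ^ e) x)) +
        Algebra.trace (R ⧸ p) (S ⧸ P) (Ideal.Quotient.mk P x) := by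
  set W := LinearMap.range (powQuotSuccInclusion p P i)
  have hW :
      W ≤ W.comap (DistribSMul.toLinearMap (R ⧸ p) (J i) (Ideal.Quotient.mk (P ^ e) x)) := by
    rintro _ ⟨z, rfl⟩
    exact ⟨Ideal.Quotient.mk (P ^ e) x • z, rfl⟩
  rw [LinearMap.trace_eq_trace_restrict_add_trace_mapQ W _ hW]
  congr 1
  · exact (LinearMap.trace_eq_of_intertwines (LinearEquiv.ofInjective _
      (powQuotSuccInclusion_injective p P i)) fun _ => rfl).symm
  · obtain ⟨a, ha, ha'⟩ := SetLike.exists_of_lt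
      (pow_right_strictAnti P hP0 (IsPrime.ne_top inferInstance) (le_refl (i + 1)))
    refine (LinearMap.trace_eq_of_intertwines (LinearEquiv.ofBijective _
      ⟨quotientToQuotientRangePowQuotSucc_injective p P hi ha ha',
        quotientToQuotientRangePowQuotSucc_surjective p P hP0 hi ha ha'⟩) fun z => ?_).symm
    obtain ⟨y, rfl⟩ := Ideal.Quotient.mk_surjective z
    change quotientToQuotientRangePowQuotSucc p P ha (Submodule.Quotient.mk (x * y)) =
      W.mapQ W _ hW (quotientToQuotientRangePowQuotSucc p P ha (Submodule.Quotient.mk y))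
    rw [quotientToQuotientRangePowQuotSucc_mk, quotientToQuotientRangePowQuotSucc_mk,
      Submodule.mapQ_apply]
    congr 1
    ext
    simp [mul_left_comm]

theorem Ideal.trace_smul_powQuot (hP0 : P ≠ ⊥) (x : S) {i : ℕ} (hi : i ≤ e) :
    LinearMap.trace (R ⧸ p) (J i)
        (DistribSMul.toLinearMap (R ⧸ p) (J i) (Ideal.Quotient.mk (P ^ e) x)) =
      (e - i) • Algebra.trace (R ⧸ p) (S ⧸ P) (Ideal.Quotient.mk P x) := by
  induction hi using Nat.decreasingInduction with
  | self =>
    have : Subsingleton (J e) := Submodule.subsingleton_iff_eq_bot.mpr (map_quotient_self _)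
    rw [Subsingleton.elim (DistribSMul.toLinearMap _ _ _) 0, map_zero, Nat.sub_self, zero_smul]
  | of_succ i hi ih =>
    rw [trace_smul_powQuot_eq_add p P hP0 x hi, ih, ← succ_nsmul]
    congr 1
    omega

theorem Algebra.trace_quotient_pow_ramificationIdx (hP0 : P ≠ ⊥) (x : S) :
    Algebra.trace (R ⧸ p) (S ⧸ P ^ e) (Ideal.Quotient.mk (P ^ e) x) =
      e • Algebra.trace (R ⧸ p) (S ⧸ P) (Ideal.Quotient.mk P x) := by
  have htop : (J 0).restrictScalars (R ⧸ p) = ⊤ := by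
    rw [pow_zero, one_eq_top, Ideal.map_top, Submodule.restrictScalars_top]
  have h0 := trace_smul_powQuot p P hP0 x (Nat.zero_le e)
  rw [Nat.sub_zero] at h0
  rw [← h0]
  exact (LinearMap.trace_eq_of_intertwines (LinearEquiv.ofTop _ htop) fun _ => rfl).symm

theorem Algebra.trace_quotient_pow_ramificationIdx_eq_zero_iff (hP0 : P ≠ ⊥)
    [Module.Finite (R ⧸ p) (S ⧸ P)] [Algebra.IsSeparable (R ⧸ p) (S ⧸ P)] :
    Algebra.trace (R ⧸ p) (S ⧸ P ^ e) = 0 ↔ (e : R ⧸ p) = 0 := by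
  have : P.IsMaximal := IsPrime.isMaximal ‹_› hP0
  constructor
  · intro h
    obtain ⟨z, hz⟩ := Algebra.trace_surjective (R ⧸ p) (S ⧸ P) 1
    obtain ⟨x, rfl⟩ := Ideal.Quotient.mk_surjective z
    have := Algebra.trace_quotient_pow_ramificationIdx p P hP0 x
    rwa [h, LinearMap.zero_apply, hz, nsmul_one, eq_comm] at this
  · intro he
    refine LinearMap.ext fun y => ?_
    obtain ⟨x, rfl⟩ := Ideal.Quotient.mk_surjective y
    rw [Algebra.trace_quotient_pow_ramificationIdx p P hP0 x, nsmul_eq_mul, he, zero_mul,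
      LinearMap.zero_apply]

end QuotientPow

theorem Algebra.trace_quotient_map_eq_zero_iff {R S : Type*} [CommRing R] [CommRing S]
    [Algebra R S] [IsDedekindDomain S] [Module.Finite R S] (p : Ideal R) [p.IsMaximal]
    (hp : p.map (algebraMap R S) ≠ ⊥) :
    Algebra.trace (R ⧸ p) (S ⧸ p.map (algebraMap R S)) = 0 ↔
      ∀ P ∈ IsDedekindDomain.primesOverFinset p S,
        Algebra.trace (R ⧸ p) (S ⧸ P ^ ramificationIdx' p P) = 0 := by
  let e := AlgEquiv.ofLinearEquiv (Factors.piQuotientLinearEquiv S p hp)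
    (map_one (Factors.piQuotientEquiv p hp)) (map_mul (Factors.piQuotientEquiv p hp))
  calc Algebra.trace (R ⧸ p) (S ⧸ p.map (algebraMap R S)) = 0
      ↔ Algebra.trace (R ⧸ p) (∀ P : IsDedekindDomain.primesOverFinset p S,
          S ⧸ P.1 ^ ramificationIdx' p P.1) = 0 := by
        simp only [LinearMap.ext_iff, LinearMap.zero_apply, e.surjective.forall,
          Algebra.trace_eq_of_algEquiv]
    _ ↔ _ := Algebra.trace_pi_eq_zero_iff _
    _ ↔ _ := Subtype.forall

theorem Algebra.intTrace_mem_iff_forall_ramificationIdx_eq_zero {R S : Type*} [CommRing R]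
    [IsDedekindDomain R] [CommRing S] [IsDedekindDomain S] [Algebra R S] [Module.Finite R S]
    [Module.IsTorsionFree R S] {p : Ideal R} [p.IsMaximal] (hp : p ≠ ⊥) [Finite (R ⧸ p)] :
    (∀ x : S, Algebra.intTrace R S x ∈ p) ↔
      ∀ P ∈ p.primesOver S, (ramificationIdx' p P : R ⧸ p) = 0 := by
  calc (∀ x : S, Algebra.intTrace R S x ∈ p)
      ↔ Algebra.trace (R ⧸ p) (S ⧸ p.map (algebraMap R S)) = 0 := by
        simp only [LinearMap.ext_iff, Ideal.Quotient.mk_surjective.forall, LinearMap.zero_apply,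
          Algebra.trace_quotient_eq_of_isDedekindDomain, Ideal.Quotient.eq_zero_iff_mem]
    _ ↔ ∀ P ∈ IsDedekindDomain.primesOverFinset p S,
          Algebra.trace (R ⧸ p) (S ⧸ P ^ ramificationIdx' p P) = 0 :=
        Algebra.trace_quotient_map_eq_zero_iff p (map_ne_bot_of_ne_bot hp)
    _ ↔ _ := by
      refine forall_congr' fun P => ?_
      rw [IsDedekindDomain.mem_primesOverFinset_iff hp S]
      refine imp_congr_right fun ⟨_, _⟩ => ?_
      have hP0 := ne_bot_of_liesOver_of_ne_bot hp P
      have : NeZero (ramificationIdx' p P) :=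
        ⟨IsDedekindDomain.ramificationIdx'_ne_zero_of_liesOver P hp⟩
      have : IsScalarTower R (R ⧸ p) (S ⧸ P) := .of_algebraMap_eq' rfl
      have : IsScalarTower R (R ⧸ p) (S ⧸ P ^ ramificationIdx' p P) := .of_algebraMap_eq' rfl
      have : Module.Finite (R ⧸ p) (S ⧸ P) := .of_restrictScalars_finite R _ _
      have : Module.Finite (R ⧸ p) (S ⧸ P ^ ramificationIdx' p P) :=
        .of_restrictScalars_finite R _ _
      have : P.IsMaximal := IsPrime.isMaximal ‹_› hP0
      have : Finite (S ⧸ P) := Module.finite_of_finite (R ⧸ p)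
      exact Algebra.trace_quotient_pow_ramificationIdx_eq_zero_iff p P hP0

end RamificationIdx

open NumberField

theorem stmt_4_general (K : Type*) [Field K] [NumberField K]
    (k : ℕ)
    (htr : LinearMap.range (Algebra.trace ℤ (𝓞 K)) = Ideal.span {(k : ℤ)})
    (p : ℕ) (hp : p.Prime) :
    p ∣ k ↔
      ∀ P : Ideal (𝓞 K), P.IsPrime →
        Ideal.comap (algebraMap ℤ (𝓞 K)) P = Ideal.span {(p : ℤ)} →
        p ∣ Ideal.ramificationIdx' (Ideal.span {(p : ℤ)}) P := by
  have : Fact p.Prime := ⟨hp⟩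
  have : CharP (ℤ ⧸ Ideal.span {(p : ℤ)}) p := ringChar.of_eq (Int.ringChar_idealQuot p)
  have hp0 : Ideal.span {(p : ℤ)} ≠ ⊥ := by simpa using hp.ne_zero
  have key := Algebra.intTrace_mem_iff_forall_ramificationIdx_eq_zero (S := 𝓞 K) hp0
  simp_rw [Algebra.intTrace_eq_trace, Ideal.mem_span_singleton, CharP.cast_eq_zero_iff _ p] at key
  rw [← Int.natCast_dvd_natCast,
    LinearMap.dvd_iff_forall_dvd_of_range_eq_span_singleton _ htr, key]
  simp [Ideal.primesOver, Ideal.liesOver_iff, Ideal.under, eq_comm]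

/-- (Maurer) A rational prime `p` divides the generator `k` of `tr_{K/ℚ}(O_K)` if and
only if `p` divides `e(𝔭|p)` for every prime `𝔭` of `O_K` lying over `p`. -/
theorem stmt_4 (K : Type*) [Field K] [NumberField K]
    (k : ℕ) (hk : 0 < k)
    (htr : LinearMap.range (Algebra.trace ℤ (𝓞 K)) = Ideal.span {(k : ℤ)})
    (p : ℕ) (hp : p.Prime) :
    p ∣ k ↔
      ∀ P : Ideal (𝓞 K), P.IsPrime →
        Ideal.comap (algebraMap ℤ (𝓞 K)) P = Ideal.span {(p : ℤ)} →
        p ∣ Ideal.ramificationIdx' (Ideal.span {(p : ℤ)}) P :=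
  stmt_4_general K k htr p hp
end

section
/- Let L be a number field of degree n such that for every prime p dividing n one has p^n does not divide Disc(L). Then tr_{L/ℚ}(O_L) = ℤ. -/
/-!
If the trace ideal `tr(𝓞_L)` were proper, some prime `p` would divide every trace. Then every
entry of the trace form matrix of an integral basis is divisible by `p`, so `p ^ n ∣ Disc(L)`,
while `p ∣ tr(1) = n`.
-/

open NumberField

theorem Matrix.pow_card_dvd_det_of_forall_dvd {ι R : Type*} [Fintype ι] [DecidableEq ι]
    [CommRing R] (M : Matrix ι ι R) (c : R) (h : ∀ i j, c ∣ M i j) :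
    c ^ Fintype.card ι ∣ M.det := by
  choose N hN using h
  have hM : M = c • Matrix.of N := by
    ext i j
    exact hN i j
  rw [hM, Matrix.det_smul]
  exact dvd_mul_right _ _

theorem Algebra.pow_card_dvd_discr_of_forall_dvd_trace {ι R A : Type*} [Fintype ι]
    [DecidableEq ι] [CommRing R] [CommRing A] [Algebra R A] (b : ι → A) (c : R)
    (h : ∀ x : A, c ∣ Algebra.trace R A x) :
    c ^ Fintype.card ι ∣ Algebra.discr R b :=
  Matrix.pow_card_dvd_det_of_forall_dvd _ c fun _ _ => h _

theorem Int.exists_prime_forall_dvd_of_ne_top {I : Ideal ℤ} (hI : I ≠ ⊤) :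
    ∃ p : ℕ, p.Prime ∧ ∀ x ∈ I, (p : ℤ) ∣ x := by
  obtain ⟨d, rfl⟩ := (inferInstance : I.IsPrincipal)
  have hd : d.natAbs ≠ 1 := fun h1 =>
    hI (Ideal.span_singleton_eq_top.2 (Int.isUnit_iff_natAbs_eq.2 h1))
  obtain ⟨p, hp, hpd⟩ := Nat.exists_prime_and_dvd hd
  refine ⟨p, hp, fun x hx => ?_⟩
  obtain ⟨y, rfl⟩ := Ideal.mem_span_singleton'.1 hx
  exact (Int.natCast_dvd.2 hpd).mul_left y

/-- If for every prime `p ∣ n` one has `p^n ∤ Disc(L)`, then `tr_{L/ℚ}(O_L) = ℤ`. -/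
theorem stmt_5 (L : Type*) [Field L] [NumberField L]
    (n : ℕ) (hdeg : Module.finrank ℚ L = n)
    (h : ∀ p : ℕ, p.Prime → p ∣ n → ¬ ((p : ℤ) ^ n ∣ NumberField.discr L)) :
    LinearMap.range (Algebra.trace ℤ (𝓞 L)) = ⊤ := by
  by_contra hne
  obtain ⟨p, hp, hdvd⟩ := Int.exists_prime_forall_dvd_of_ne_top hne
  have hdvd_trace (x : 𝓞 L) : (p : ℤ) ∣ Algebra.trace ℤ (𝓞 L) x := hdvd _ ⟨x, rfl⟩
  have hrank : Module.finrank ℤ (𝓞 L) = n := (RingOfIntegers.rank L).trans hdeg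
  have hpn : p ∣ n := by
    have := hdvd_trace 1
    rwa [← map_one (algebraMap ℤ (𝓞 L)), Algebra.trace_algebraMap, hrank, nsmul_one,
      Int.natCast_dvd_natCast] at this
  have hcard : Fintype.card (Module.Free.ChooseBasisIndex ℤ (𝓞 L)) = n := by
    rw [← hrank, Module.finrank_eq_card_chooseBasisIndex]
  refine h p hp hpn ?_
  rw [← hcard]
  exact Algebra.pow_card_dvd_discr_of_forall_dvd_trace _ _ hdvd_trace
end

section
/- Let L be a number field of degree n > 2 whose discriminant is a fundamental discriminant (i.e., Disc(L) is the discriminant of a quadratic field: either squarefree and ≡ 1 mod 4, or 4m with m squarefree and m ≡ 2 or 3 mod 4). Then tr_{L/ℚ}(O_L) = ℤ. -/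
open NumberField

/-- `d` is a fundamental discriminant: the discriminant of a quadratic field, i.e.
either squarefree and `≡ 1 mod 4`, or `4m` with `m` squarefree and `m ≡ 2, 3 mod 4`. -/
def IsFundamentalDiscriminant (d : ℤ) : Prop :=
  (Squarefree d ∧ d % 4 = 1) ∨
  (∃ m : ℤ, d = 4 * m ∧ Squarefree m ∧ (m % 4 = 2 ∨ m % 4 = 3))

/-- If all traces are divisible by `p`, then `p ^ (finrank)` divides the discriminant. -/
theorem pow_dvd_discr (L : Type*) [Field L] [NumberField L] (p : ℤ)
    (hdvd : ∀ x : 𝓞 L, p ∣ Algebra.trace ℤ (𝓞 L) x) :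
    p ^ Module.finrank ℤ (𝓞 L) ∣ NumberField.discr L := by
  classical
  set b := RingOfIntegers.basis L with hb
  have hcard : Fintype.card (Module.Free.ChooseBasisIndex ℤ (𝓞 L)) = Module.finrank ℤ (𝓞 L) :=
    (Module.finrank_eq_card_basis b).symm
  set M := Algebra.traceMatrix ℤ (b : _ → 𝓞 L) with hM
  have hMd : ∀ i j, p ∣ M i j := fun i j => by
    rw [hM, Algebra.traceMatrix_apply, Algebra.traceForm_apply]
    exact hdvd _
  set N : Matrix (Module.Free.ChooseBasisIndex ℤ (𝓞 L))
      (Module.Free.ChooseBasisIndex ℤ (𝓞 L)) ℤ := Matrix.of fun i j => M i j / p with hN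
  have hMN : M = p • N := by
    ext i j
    simp only [hN, Matrix.smul_apply, Matrix.of_apply, smul_eq_mul]
    exact (Int.mul_ediv_cancel' (hMd i j)).symm
  have : NumberField.discr L = M.det := rfl
  rw [this, hMN, Matrix.det_smul, hcard]
  exact Dvd.intro _ rfl

/-- If `L` has degree `n > 2` and fundamental discriminant, then `tr_{L/ℚ}(O_L) = ℤ`. -/
theorem stmt_7 (L : Type*) [Field L] [NumberField L]
    (n : ℕ) (hn : 2 < n) (hdeg : Module.finrank ℚ L = n)
    (hfund : IsFundamentalDiscriminant (NumberField.discr L)) :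
    LinearMap.range (Algebra.trace ℤ (𝓞 L)) = ⊤ := by
  by_contra h
  set I : Ideal ℤ := LinearMap.range (Algebra.trace ℤ (𝓞 L)) with hI
  obtain ⟨g, hg⟩ : ∃ g : ℤ, I = Ideal.span {g} :=
    ⟨Submodule.IsPrincipal.generator I, (Ideal.span_singleton_generator I).symm⟩
  have hgu : ¬ IsUnit g := fun hu => h (hg ▸ Ideal.span_singleton_eq_top.mpr hu)
  obtain ⟨p, hp, hpg⟩ := Int.exists_prime_and_dvd (fun h1 => hgu (Int.isUnit_iff_natAbs_eq.mpr h1))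
  have hdvd : ∀ x : 𝓞 L, p ∣ Algebra.trace ℤ (𝓞 L) x := by
    intro x
    refine dvd_trans hpg ?_
    rw [← Ideal.mem_span_singleton, ← hg]
    exact LinearMap.mem_range_self _ x
  have hrank : Module.finrank ℤ (𝓞 L) = n := (RingOfIntegers.rank L).trans hdeg
  -- p divides n, since trace 1 = n
  have hpn : p ∣ (n : ℤ) := by
    have := hdvd 1
    rw [show (1 : 𝓞 L) = algebraMap ℤ (𝓞 L) 1 by simp, Algebra.trace_algebraMap,
      hrank] at this
    simpa using this
  -- p ^ n divides the discriminant
  have hpd : p ^ n ∣ NumberField.discr L := hrank ▸ pow_dvd_discr L p hdvd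
  have hsq : p * p ∣ NumberField.discr L :=
    (by ring_nf; exact pow_dvd_pow p (by omega) : p * p ∣ p ^ n).trans hpd
  rcases hfund with ⟨hsf, _⟩ | ⟨m, hm, hsf, _⟩
  · exact hp.not_unit (hsf p hsq)
  · by_cases h2 : p.natAbs = 2
    · -- p = ±2 : n is even, so n ≥ 4, and 16 ∣ 4m, so 4 ∣ m
      have h2n : 2 ∣ n := by
        have := Int.natAbs_dvd_natAbs.mpr hpn
        rwa [h2, Int.natAbs_natCast] at this
      have hn4 : 4 ≤ n := by omega
      have hp16 : (16 : ℤ) ∣ NumberField.discr L := by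
        have h4 : p ^ 4 ∣ NumberField.discr L := (pow_dvd_pow p hn4).trans hpd
        rcases Int.natAbs_eq_iff.mp h2 with rfl | rfl
        · norm_num at h4 ⊢; exact h4
        · norm_num at h4 ⊢; exact h4
      rw [hm] at hp16
      have h4m : (2 : ℤ) * 2 ∣ m := by omega
      exact (fun hu => by simpa using Int.isUnit_iff.mp hu : ¬ IsUnit (2 : ℤ)) (hsf 2 h4m)
    · -- p odd : p^2 coprime to 4, so p^2 ∣ m
      have hcop : IsCoprime (p * p) (4 : ℤ) := by
        refine (IsCoprime.mul_left ?_ ?_) <;>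
        · rw [hp.coprime_iff_not_dvd]
          intro hd
          have hpa2 : p ∣ 2 := (hp.dvd_mul.mp (by rwa [show (4:ℤ) = 2 * 2 by norm_num] at hd)).elim id id
          have h2' := Int.natAbs_dvd_natAbs.mpr hpa2
          have hle : p.natAbs ≤ 2 := Nat.le_of_dvd (by norm_num) (by simpa using h2')
          have h2le := (Int.prime_iff_natAbs_prime.mp hp).two_le
          omega
      rw [hm] at hsq
      have : p * p ∣ m := hcop.dvd_of_dvd_mul_left hsq
      exact hp.not_unit (hsf p this)
end

section
/- Let m ≥ 2 and let u_1,…,u_m and s_1,…,s_m be integers. Then there exist integers c_1,…,c_m such that c_1·s_1 + ⋯ + c_m·s_m = 0 and gcd(u_1 − c_1, …, u_m − c_m) = 1. -/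
/-!
Only two coordinates are needed. The kernel of `(p, q) ↦ p * s₀ + q * s₁` contains a primitive
vector `(p, q)`, and for a primitive `(p, q)` with `r * p + t * q = 1` the shift by
`k = 1 - r * u₀ - t * u₁` makes `(u₀ + k * p, u₁ + k * q)` coprime. Putting `c = -k • (p, q, 0, …, 0)`
then gives `∑ c i * s i = 0` and two coprime entries of `u - c`.
-/

open Matrix

theorem Int.exists_isCoprime_mul_add_mul_eq_zero (a b : ℤ) :
    ∃ p q : ℤ, IsCoprime p q ∧ p * a + q * b = 0 := by
  rcases (Int.gcd a b).eq_zero_or_pos with h | h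
  · exact ⟨1, 0, isCoprime_one_left, by simp [(Int.gcd_eq_zero_iff.mp h).1]⟩
  · obtain ⟨a', b', hab, ha, hb⟩ := Int.exists_gcd_one h
    refine ⟨b', -a', (Int.isCoprime_iff_gcd_eq_one.mpr hab).symm.neg_right, ?_⟩
    linear_combination b' * ha - a' * hb

theorem IsCoprime.exists_isCoprime_add_mul {R : Type*} [CommRing R] {p q : R}
    (hpq : IsCoprime p q) (x y : R) : ∃ k : R, IsCoprime (x + k * p) (y + k * q) := by
  obtain ⟨r, t, hrt⟩ := hpq
  exact ⟨1 - r * x - t * y, r, t, by linear_combination (1 - r * x - t * y) * hrt⟩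

theorem Finset.gcd_eq_one_of_isCoprime {ι α : Type*} [CommRing α] [IsDomain α]
    [NormalizedGCDMonoid α] {s : Finset ι} {f : ι → α} {i j : ι} (hi : i ∈ s) (hj : j ∈ s)
    (h : IsCoprime (f i) (f j)) : s.gcd f = 1 := by
  rw [← Finset.normalize_gcd, normalize_eq_one]
  exact h.isUnit_of_dvd' (Finset.gcd_dvd hi) (Finset.gcd_dvd hj)

/-- Lemma (a): given integers `u i` and `s i` (`m ≥ 2`), there exist integers `c i`
with `∑ c i * s i = 0` and `gcd (u i - c i) = 1`. -/
theorem stmt_11 (m : ℕ) (hm : 2 ≤ m) (u s : Fin m → ℤ) :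
    ∃ c : Fin m → ℤ, (∑ i, c i * s i) = 0 ∧
      Finset.univ.gcd (fun i => u i - c i) = 1 := by
  let i : Fin m := ⟨0, by omega⟩
  let j : Fin m := ⟨1, by omega⟩
  have hij : i ≠ j := by simp [i, j, Fin.ext_iff]
  obtain ⟨p, q, hpq, hker⟩ := Int.exists_isCoprime_mul_add_mul_eq_zero (s i) (s j)
  obtain ⟨k, hk⟩ := hpq.exists_isCoprime_add_mul (u i) (u j)
  let v : Fin m → ℤ := Pi.single i p + Pi.single j q
  refine ⟨-(k • v), ?_, Finset.gcd_eq_one_of_isCoprime (Finset.mem_univ i) (Finset.mem_univ j) ?_⟩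
  · change -(k • v) ⬝ᵥ s = 0
    rw [neg_dotProduct, smul_dotProduct, add_dotProduct, single_dotProduct, single_dotProduct,
      hker, smul_zero, neg_zero]
  · simpa [v, hij, hij.symm, sub_eq_add_neg] using hk
end

section
/- Let m ≥ 2 and let r, s_1, …, s_m be integers with gcd(r, s_1, …, s_m) = 1. Then there exist integers h_1, …, h_m such that gcd(r·h_1 + s_1, …, r·h_m + s_m) = 1. -/
/-!
Let `D = gcd(s_j : j ≠ i)`, so that `gcd(r, s_i, D) = 1`. If `D ≠ 0`, take `k` to be the product
of the primes dividing `D` but not `s_i`. A prime `p ∣ D` divides exactly one of `k` and `s_i`;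
if it also divided `r k + s_i`, then either `p ∣ k` and hence `p ∣ s_i`, or `p ∣ s_i` and hence
`p ∣ r`, both impossible. So `gcd(r k + s_i, D) = 1` and `h = k e_i` works.
If `D = 0`, all `s_j` with `j ≠ i` vanish and `gcd(r, s_i) = 1`, so `h = e_j` for any `j ≠ i`
works.
-/

theorem exists_isRelPrime_mul_add {R : Type*} [CommRing R] [IsDomain R]
    [UniqueFactorizationMonoid R] {a b c : R} (hc : c ≠ 0)
    (h : ∀ d, d ∣ a → d ∣ b → d ∣ c → IsUnit d) : ∃ k, IsRelPrime (a * k + b) c := by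
  classical
  open UniqueFactorizationMonoid in
  refine ⟨((factors c).filter (¬ · ∣ b)).prod,
    WfDvdMonoid.isRelPrime_of_no_irreducible_factors (fun h0 => hc h0.2) fun p hirr hpx hpc => ?_⟩
  have hp : Prime p := hirr.prime
  have hpk : p ∣ ((factors c).filter (¬ · ∣ b)).prod ↔ ¬ p ∣ b := by
    constructor
    · intro hpK hpb
      obtain ⟨q, hq, hpq⟩ := hp.exists_mem_multiset_dvd hpK
      rw [Multiset.mem_filter] at hq
      exact hq.2 ((hirr.associated_of_dvd (irreducible_of_factor q hq.1) hpq).dvd_iff_dvd_left.mp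
        hpb)
    · intro hpb
      obtain ⟨q, hq, hpq⟩ := exists_mem_factors_of_dvd hc hirr hpc
      exact hpq.dvd.trans <| Multiset.dvd_prod <|
        Multiset.mem_filter.mpr ⟨hq, fun hqb => hpb (hpq.dvd.trans hqb)⟩
  by_cases hpb : p ∣ b
  · have hpa : p ∣ a :=
      (hp.dvd_or_dvd ((dvd_add_left hpb).mp hpx)).resolve_right (hpk.not_left.mpr hpb)
    exact hp.not_isUnit (h p hpa hpb hpc)
  · exact hpb ((dvd_add_right ((hpk.mpr hpb).mul_left a)).mp hpx)

theorem Finset.gcd_eq_one_iff_forall_dvd_isUnit {R ι : Type*} [CommMonoidWithZero R]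
    [NormalizedGCDMonoid R] {t : Finset ι} {f : ι → R} :
    t.gcd f = 1 ↔ ∀ d, (∀ l ∈ t, d ∣ f l) → IsUnit d := by
  rw [← normalize_gcd, normalize_eq_one]
  exact ⟨fun hu d hd => isUnit_of_dvd_unit (Finset.dvd_gcd hd) hu,
    fun H => H _ fun l hl => Finset.gcd_dvd hl⟩

theorem exists_finset_gcd_mul_add_eq_one {R ι : Type*} [CommRing R] [IsDomain R]
    [UniqueFactorizationMonoid R] [NormalizedGCDMonoid R] [DecidableEq ι] {t : Finset ι}
    {i j : ι} (hi : i ∈ t) (hj : j ∈ t) (hij : i ≠ j) {r : R} {s : ι → R}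
    (h : gcd r (t.gcd s) = 1) : ∃ hs : ι → R, t.gcd (fun l => r * hs l + s l) = 1 := by
  set D := (t.erase i).gcd s
  have hrsD : ∀ d, d ∣ r → d ∣ s i → d ∣ D → IsUnit d := fun d hdr hds hdD =>
    isUnit_of_dvd_one <| h ▸ dvd_gcd hdr <| by
      rw [← Finset.insert_erase hi, Finset.gcd_insert]
      exact dvd_gcd hds hdD
  rcases eq_or_ne D 0 with hD | hD
  · have hsj : s j = 0 :=
      zero_dvd_iff.mp (hD ▸ Finset.gcd_dvd (Finset.mem_erase.mpr ⟨hij.symm, hj⟩))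
    refine ⟨Pi.single j 1, Finset.gcd_eq_one_iff_forall_dvd_isUnit.mpr fun d hd =>
      hrsD d ?_ ?_ (hD ▸ dvd_zero d)⟩
    · simpa [hsj] using hd j hj
    · simpa [hij] using hd i hi
  · obtain ⟨k, hk⟩ := exists_isRelPrime_mul_add hD hrsD
    refine ⟨Pi.single i k, Finset.gcd_eq_one_iff_forall_dvd_isUnit.mpr fun d hd =>
      hk ?_ (Finset.dvd_gcd fun l hl => ?_)⟩
    · simpa using hd i hi
    · simpa [Finset.ne_of_mem_erase hl] using hd l (Finset.mem_of_mem_erase hl)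

/-- Lemma (b): if `gcd(r, s_1, …, s_m) = 1` (`m ≥ 2`), there exist integers `h i`
such that `gcd (r * h i + s i) = 1`. -/
theorem stmt_12 (m : ℕ) (hm : 2 ≤ m) (r : ℤ) (s : Fin m → ℤ)
    (h : gcd r (Finset.univ.gcd s) = 1) :
    ∃ hs : Fin m → ℤ, Finset.univ.gcd (fun i => r * hs i + s i) = 1 :=
  exists_finset_gcd_mul_add_eq_one (Finset.mem_univ ⟨0, by omega⟩)
    (Finset.mem_univ ⟨1, by omega⟩) (by simp [Fin.ext_iff]) h
end

section
/- Let K be a number field of degree n ≥ 3 with tr_{K/ℚ}(O_K) = kℤ, and let {1, α_1, …, α_{n−1}} be a ℤ-basis of O_K with traces t_i := tr(α_i) satisfying t_i ≡ 0 mod n for i ≤ n−2 and t_{n−1} ≡ k mod n. Then {α_1 − t_1/n, …, α_{n−2} − t_{n−2}/n, (n/k)·α_{n−1} − t_{n−1}/k} is a ℤ-basis of the trace-zero module O_K^0. -/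
/-!
Write `x ∈ 𝓞 K` as `a₀ + ∑ aᵢ αᵢ`. The proposed elements have trace zero, and their
coordinates on `α₁, …, α_{n-1}` form a diagonal matrix with entries `1, …, 1, n/k`. Since
`tr 1 = n ≠ 0`, an element of trace zero is determined by these coordinates, so the proposed
elements form a basis of the trace-zero module as soon as every trace-zero `x` has `a_{n-1}`
divisible by `n/k`. This holds because `tr x ≡ k a_{n-1} (mod n)` by the congruences on the
traces `tᵢ`, and `k ∣ n` because `n = tr 1`.
-/

open NumberField

theorem Int.ediv_mul_comm_of_dvd {k n t : ℤ} (hn : k ∣ n) (ht : k ∣ t) :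
    n / k * t = t / k * n := by
  obtain ⟨a, rfl⟩ := hn
  obtain ⟨c, rfl⟩ := ht
  rcases eq_or_ne k 0 with rfl | hk
  · simp
  · rw [Int.mul_ediv_cancel_left _ hk, Int.mul_ediv_cancel_left _ hk]
    ring

theorem range_fin_val_add_one {n : ℕ} (hn : 0 < n) :
    Set.range (fun i : Fin (n - 1) => (⟨i + 1, by omega⟩ : Fin n)) = {⟨0, hn⟩}ᶜ := by
  ext j
  simp only [Set.mem_range, Set.mem_compl_singleton_iff, ne_eq, Fin.ext_iff]
  constructor
  · rintro ⟨i, hi⟩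
    omega
  · intro hj
    exact ⟨⟨j - 1, by omega⟩, by simp only; omega⟩

namespace Module.Basis

variable {R M ι κ : Type*} [CommRing R] [AddCommGroup M] [Module R M]

theorem repr_smul_sub_smul_apply [DecidableEq ι] (b : Basis ι R M) {i j z : ι} (hj : j ≠ z)
    (e s : R) : b.repr (e • b i - s • b z) j = if i = j then e else 0 := by
  simp [Finsupp.single_apply, hj.symm]

variable [Fintype ι]

theorem eq_zero_of_mem_ker_of_repr_eq_zero [IsDomain R] (b : Basis ι R M) {T : M →ₗ[R] R}
    {z : ι} (hz : T (b z) ≠ 0) {x : M} (hx : T x = 0) (hrepr : ∀ j ≠ z, b.repr x j = 0) :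
    x = 0 := by
  have hx_eq : x = b.repr x z • b z := by
    conv_lhs => rw [← b.sum_repr x]
    exact Finset.sum_eq_single z (fun j _ hj => by rw [hrepr j hj, zero_smul]) (by simp)
  rw [hx_eq, map_smul, smul_eq_mul, mul_eq_zero, or_iff_left hz] at hx
  rw [hx_eq, hx, zero_smul]

theorem dvd_sub_repr_mul (b : Basis ι R M) (T : M →ₗ[R] R) {N k : R} {l : ι}
    (hdvd : ∀ j ≠ l, N ∣ T (b j)) (hl : N ∣ T (b l) - k) (x : M) :
    N ∣ T x - b.repr x l * k := by
  classical
  have hT : T x = ∑ j, b.repr x j * T (b j) := by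
    conv_lhs => rw [← b.sum_repr x]
    simp only [map_sum, map_smul, smul_eq_mul]
  have hsplit : T x - b.repr x l * k =
      b.repr x l * (T (b l) - k) + ∑ j ∈ Finset.univ.erase l, b.repr x j * T (b j) := by
    rw [hT, ← Finset.add_sum_erase _ _ (Finset.mem_univ l)]
    ring
  rw [hsplit]
  exact dvd_add (dvd_mul_of_dvd_right hl _)
    (Finset.dvd_sum fun j hj => dvd_mul_of_dvd_right (hdvd j (Finset.ne_of_mem_erase hj)) _)

theorem ediv_dvd_repr_of_map_eq_zero (b : Basis ι ℤ M) (T : M →ₗ[ℤ] ℤ) {N k : ℤ}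
    {l : ι} (hdvd : ∀ j ≠ l, N ∣ T (b j)) (hl : N ∣ T (b l) - k) (hkN : k ∣ N) (hk : k ≠ 0)
    {x : M} (hx : T x = 0) : N / k ∣ b.repr x l := by
  rw [Int.div_dvd_iff_dvd_mul hkN hk, mul_comm, ← dvd_neg, ← zero_sub, ← hx]
  exact b.dvd_sub_repr_mul T hdvd hl x

theorem exists_basis_ker_smul_sub_smul [IsDomain R] [Fintype κ] (b : Basis ι R M)
    (T : M →ₗ[R] R) {z : ι} (hz : T (b z) ≠ 0) {φ : κ → ι} (hφ : Function.Injective φ)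
    (hrange : Set.range φ = {z}ᶜ) (e s : κ → R) (he : ∀ i, e i ≠ 0)
    (hker : ∀ i, T (e i • b (φ i) - s i • b z) = 0)
    (hdvd : ∀ x ∈ LinearMap.ker T, ∀ i, e i ∣ b.repr x (φ i)) :
    ∃ c : Basis κ R (LinearMap.ker T), ∀ i, (c i : M) = e i • b (φ i) - s i • b z := by
  classical
  set v : κ → M := fun i => e i • b (φ i) - s i • b z
  have hφz : ∀ i, φ i ≠ z := fun i => hrange.subset (Set.mem_range_self i)
  have repr_sum : ∀ (g : κ → R) j, b.repr (∑ i, g i • v i) (φ j) = g j * e j := by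
    intro g j
    simp only [v, map_sum, map_smul, Finsupp.finsetSum_apply, Finsupp.smul_apply,
      b.repr_smul_sub_smul_apply (hφz j), hφ.eq_iff, smul_eq_mul, mul_ite, mul_zero,
      Finset.sum_ite_eq', Finset.mem_univ, if_true]
  let w : κ → LinearMap.ker T := fun i => ⟨v i, hker i⟩
  have hli : LinearIndependent R w := by
    refine LinearIndependent.of_comp (LinearMap.ker T).subtype ?_
    rw [Fintype.linearIndependent_iff]
    intro g hg i
    have hgi := repr_sum g i
    rw [show ∑ i, g i • v i = 0 from hg, map_zero, Finsupp.zero_apply] at hgi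
    exact (mul_eq_zero.mp hgi.symm).resolve_right (he i)
  have hsp : ⊤ ≤ Submodule.span R (Set.range w) := by
    rintro ⟨x, hx⟩ -
    choose g hg using hdvd x hx
    rw [Submodule.mem_span_range_iff_exists_fun]
    refine ⟨g, Subtype.ext ?_⟩
    have hdiff : x - ∑ i, g i • v i = 0 := by
      refine b.eq_zero_of_mem_ker_of_repr_eq_zero hz ?_ fun j hj => ?_
      · simp only [map_sub, map_sum, map_smul, v, hker, smul_zero, Finset.sum_const_zero,
          sub_zero]
        exact hx
      · obtain ⟨i, rfl⟩ : j ∈ Set.range φ := hrange ▸ hj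
        rw [map_sub, Finsupp.sub_apply, repr_sum, hg, mul_comm, sub_self]
    simpa [w] using (sub_eq_zero.mp hdiff).symm
  exact ⟨Basis.mk hli hsp, fun i => by rw [Basis.mk_apply]⟩

end Module.Basis

/-- Given a ℤ-basis `{1, α_1, …, α_{n−1}}` of `O_K` with `t_i := tr(α_i) ≡ 0 mod n`
for `i ≤ n−2` and `t_{n−1} ≡ k mod n`, the elements
`α_1 − t_1/n, …, α_{n−2} − t_{n−2}/n, (n/k)·α_{n−1} − t_{n−1}/k` form a ℤ-basis of
the trace-zero module `O_K^0`. -/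
theorem stmt_14 (K : Type*) [Field K] [NumberField K]
    (n : ℕ) (k : ℕ)
    (htr : LinearMap.range (Algebra.trace ℤ (𝓞 K)) = Ideal.span {(k : ℤ)})
    (b : Module.Basis (Fin n) ℤ (𝓞 K))
    (hb0 : ∀ i : Fin n, (i : ℕ) = 0 → b i = 1)
    (hbmid : ∀ i : Fin n, 0 < (i : ℕ) → (i : ℕ) < n - 1 →
      (n : ℤ) ∣ Algebra.trace ℤ (𝓞 K) (b i))
    (hblast : ∀ i : Fin n, (i : ℕ) = n - 1 →
      (n : ℤ) ∣ Algebra.trace ℤ (𝓞 K) (b i) - k) :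
    ∃ c : Module.Basis (Fin (n - 1)) ℤ (LinearMap.ker (Algebra.trace ℤ (𝓞 K))),
      (∀ i : Fin (n - 1), (i : ℕ) < n - 2 →
        (c i : 𝓞 K) = b ⟨(i : ℕ) + 1, by have := i.isLt; omega⟩ -
          (Algebra.trace ℤ (𝓞 K) (b ⟨(i : ℕ) + 1, by have := i.isLt; omega⟩) / n) •
            (1 : 𝓞 K)) ∧
      (∀ i : Fin (n - 1), (i : ℕ) = n - 2 →
        (c i : 𝓞 K) = ((n : ℤ) / k) • b ⟨(i : ℕ) + 1, by have := i.isLt; omega⟩ -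
          (Algebra.trace ℤ (𝓞 K) (b ⟨(i : ℕ) + 1, by have := i.isLt; omega⟩) / k) •
            (1 : 𝓞 K)) := by
  set T := Algebra.trace ℤ (𝓞 K)
  have hn : 0 < n := Fin.pos_iff_nonempty.mpr b.index_nonempty
  have hb1 : b ⟨0, hn⟩ = 1 := hb0 _ rfl
  have hT1 : T 1 = n := by simpa using Algebra.trace_algebraMap_of_basis b 1
  have hk_dvd (x : 𝓞 K) : (k : ℤ) ∣ T x :=
    Ideal.mem_span_singleton.mp (htr ▸ LinearMap.mem_range_self T x)
  have hkn : (k : ℤ) ∣ n := hT1 ▸ hk_dvd 1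
  have hk : (k : ℤ) ≠ 0 := ne_zero_of_dvd_ne_zero (by exact_mod_cast hn.ne') hkn
  have hnk : (n : ℤ) / k ≠ 0 :=
    (Int.ediv_pos_of_pos_of_dvd (by positivity) (by positivity) hkn).ne'
  have hn_dvd (j : Fin n) (hj : (j : ℕ) ≠ n - 1) : (n : ℤ) ∣ T (b j) := by
    rcases Nat.eq_zero_or_pos j with hj0 | hj0
    · rw [hb0 j hj0, hT1]
    · exact hbmid j hj0 (by omega)
  obtain ⟨c, hc⟩ := b.exists_basis_ker_smul_sub_smul T (by rw [hb1, hT1]; exact_mod_cast hn.ne')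
    (fun i j h => Fin.ext (by simpa using congrArg Fin.val h)) (range_fin_val_add_one hn)
    (fun i => if (i : ℕ) < n - 2 then 1 else (n : ℤ) / k)
    (fun i => T (b ⟨i + 1, by omega⟩) / if (i : ℕ) < n - 2 then (n : ℤ) else k)
    (fun i => by split_ifs <;> simp [hnk])
    (fun i => by
      simp only [map_sub, map_smul, hb1, hT1, smul_eq_mul]
      split_ifs with hi
      · rw [one_mul, Int.ediv_mul_cancel (hbmid _ (by simp) (by simp; omega)), sub_self]
      · rw [Int.ediv_mul_comm_of_dvd hkn (hk_dvd _), sub_self])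
    (fun x hx i => by
      split_ifs with hi
      · exact one_dvd _
      · exact b.ediv_dvd_repr_of_map_eq_zero T
          (fun j hj => hn_dvd j fun h => hj (Fin.ext (by simp only; omega)))
          (hblast _ (by simp only; omega)) hkn hk hx)
  refine ⟨c, fun i hi => ?_, fun i hi => ?_⟩
  · simp [hc, hb1, hi]
  · simp [hc, hb1, show ¬ (i : ℕ) < n - 2 by omega]
end

section
/- Let n ≥ 3 be an integer such that (ℤ/nℤ)^× is cyclic, let K be a number field of degree n with tr_{K/ℚ}(O_K) = ℤ, and let L be a number field. Then every isometry φ : (O_K^⊥, tr_{K/ℚ}) → (O_L^⊥, tr_{L/ℚ}) of quadratic ℤ-modules extends to an isometry (O_K, tr_{K/ℚ}) → (O_L, tr_{L/ℚ}). -/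
/-!
Write `n = [K : ℚ]` and `P x = n x - tr x`, so that `O_K^⊥ = P(O_K)` and
`tr (P x * P x') = n (n tr(x x') - tr x tr x')`. Since `φ` is an isometry this identity gives
`tr x tr x' ≡ tr y tr y' (mod n)` whenever `φ (P x) = P y` and `φ (P x') = P y'`; a rank count
gives `[L : ℚ] = n`. Taking `tr x₀ = 1`, the class `a = tr y₀` satisfies `a² ≡ 1`, hence
`a ≡ ε = ±1` because `(ℤ/nℤ)ˣ` is cyclic, and then `tr y ≡ ε tr x` for all such pairs. This is
exactly what makes `ψ x = (φ (P x) + ε tr x) / n` land in `O_L`; the same recipe applied to `φ⁻¹`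
inverts `ψ`, and the identity above for `K` and for `L` shows that `ψ` is an isometry.
-/

open NumberField

theorem IsCyclic.eq_one_or_eq_of_sq_eq_one {G : Type*} [Group G] [Finite G] [IsCyclic G]
    {g h : G} (h1 : h ≠ 1) (hh : h ^ 2 = 1) (hg : g ^ 2 = 1) : g = 1 ∨ g = h := by
  classical
  have := Fintype.ofFinite G
  by_contra! hne
  have hsub : ({1, h, g} : Finset G) ⊆ Finset.univ.filter (fun x => x ^ 2 = 1) := by
    simp [Finset.insert_subset_iff, hh, hg]
  have := (Finset.card_le_card hsub).trans (IsCyclic.card_pow_eq_one_le two_pos)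
  rw [Finset.card_insert_of_notMem (by simp [h1.symm, hne.1.symm]),
    Finset.card_pair hne.2.symm] at this
  omega

theorem ZMod.eq_one_or_eq_neg_one_of_mul_self_eq_one {n : ℕ} (hn : 2 < n)
    [IsCyclic (ZMod n)ˣ] {a : ZMod n} (ha : a * a = 1) : a = 1 ∨ a = -1 := by
  have : Fact (2 < n) := ⟨hn⟩
  have : NeZero n := ⟨by omega⟩
  have hne : (-1 : (ZMod n)ˣ) ≠ 1 := fun h => ZMod.neg_one_ne_one (congrArg Units.val h)
  simpa [Units.ext_iff] using IsCyclic.eq_one_or_eq_of_sq_eq_one (g := ⟨a, a, ha, ha⟩) hne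
    (by simp) (Units.ext (by simp [sq, ha]))

noncomputable def LinearMap.exactDiv {M N : Type*} [AddCommGroup M] [AddCommGroup N]
    [IsAddTorsionFree N] (F : M →ₗ[ℤ] N) {d : ℤ} (hd : d ≠ 0) (hF : ∀ x, ∃ z, d • z = F x) :
    M →ₗ[ℤ] N :=
  (LinearEquiv.ofInjective (d • LinearMap.id) (zsmul_right_injective hd)).symm.toLinearMap ∘ₗ
    F.codRestrict _ fun x => LinearMap.mem_range.2 (hF x)

theorem LinearMap.smul_exactDiv {M N : Type*} [AddCommGroup M] [AddCommGroup N]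
    [IsAddTorsionFree N] (F : M →ₗ[ℤ] N) {d : ℤ} (hd : d ≠ 0) (hF : ∀ x, ∃ z, d • z = F x)
    (x : M) : d • F.exactDiv hd hF x = F x := by
  have := (LinearEquiv.ofInjective _ (zsmul_right_injective hd)).apply_symm_apply
    (F.codRestrict (LinearMap.range (d • LinearMap.id)) (fun x => LinearMap.mem_range.2 (hF x)) x)
  exact congrArg Subtype.val this

section PerpMap

variable {A : Type*} [CommRing A]

/-- For `T = tr_{K/ℚ}` on `O_K` and `d = [K : ℚ]`, the range of `perpMap T d` is `O_K^⊥`. -/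
def perpMap (T : A →ₗ[ℤ] ℤ) (d : ℤ) : A →ₗ[ℤ] A := d • LinearMap.id - T.smulRight 1

variable {T : A →ₗ[ℤ] ℤ} {d : ℤ}

@[simp]
theorem perpMap_apply (x : A) : perpMap T d x = d • x - T x • 1 := rfl

theorem trace_perpMap (hT : T 1 = d) (x : A) : T (perpMap T d x) = 0 := by
  simp only [perpMap_apply, map_sub, map_zsmul, hT, smul_eq_mul, mul_comm, sub_self]

theorem trace_eq_zero_of_mem_range_perpMap (hT : T 1 = d) {x : A}
    (hx : x ∈ LinearMap.range (perpMap T d)) : T x = 0 := by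
  obtain ⟨x, rfl⟩ := hx
  exact trace_perpMap hT x

theorem perpMap_of_trace_eq_zero {x : A} (hx : T x = 0) : perpMap T d x = d • x := by
  simp [hx]

theorem trace_perpMap_mul_perpMap (hT : T 1 = d) (x y : A) :
    T (perpMap T d x * perpMap T d y) = d * (d * T (x * y) - T x * T y) := by
  have : perpMap T d x * perpMap T d y =
      (d * d) • (x * y) - (d * T y) • x - (d * T x) • y + (T x * T y) • 1 := by
    simp only [perpMap_apply, zsmul_eq_mul]
    push_cast
    ring
  rw [this]
  simp only [map_add, map_sub, map_zsmul, smul_eq_mul, hT]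
  ring

theorem finrank_range_perpMap_add_one [IsAddTorsionFree A] [Module.Free ℤ A] [Module.Finite ℤ A]
    [Nontrivial A] (hd : d ≠ 0) (hT : T 1 = d) :
    Module.finrank ℤ (LinearMap.range (perpMap T d)) + 1 = Module.finrank ℤ A := by
  have hker : Module.finrank ℤ (LinearMap.ker (perpMap T d)) = 1 := by
    refine le_antisymm ?_ (Module.finrank_pos_iff_exists_ne_zero.2 ⟨⟨1, ?_⟩, ?_⟩)
    · have hinj : Function.Injective (T.domRestrict (LinearMap.ker (perpMap T d))) := by
        refine (injective_iff_map_eq_zero _).2 fun x hx => Subtype.ext ?_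
        have := x.2
        rw [LinearMap.mem_ker, perpMap_of_trace_eq_zero (by simpa using hx), smul_eq_zero] at this
        simpa using this.resolve_left hd
      simpa using LinearMap.finrank_le_finrank_of_injective hinj
    · simp [hT]
    · simp [Subtype.ext_iff]
  rw [← hker, ← (perpMap T d).quotKerEquivRange.finrank_eq,
    Submodule.finrank_quotient_add_finrank]

end PerpMap

section Extension

open LinearMap

variable {A B : Type*} [CommRing A] [CommRing B]
  {T : A →ₗ[ℤ] ℤ} {S : B →ₗ[ℤ] ℤ} {n : ℕ}
  {φ : range (perpMap T n) ≃ₗ[ℤ] range (perpMap S n)}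

theorem mul_trace_mul_sub_eq_of_perpMap_eq (hn : n ≠ 0) (hT : T 1 = n) (hS : S 1 = n)
    (hφ : ∀ x y, S (φ x * φ y) = T (x * y)) {x x' : A} {y y' : B}
    (hy : perpMap S n y = φ ((perpMap T n).rangeRestrict x))
    (hy' : perpMap S n y' = φ ((perpMap T n).rangeRestrict x')) :
    n * S (y * y') - S y * S y' = n * T (x * x') - T x * T x' := by
  refine mul_left_cancel₀ (Int.natCast_ne_zero.2 hn) ?_
  rw [← trace_perpMap_mul_perpMap hS, ← trace_perpMap_mul_perpMap hT, hy, hy', hφ]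
  rfl

theorem trace_mul_trace_modEq_of_perpMap_eq (hn : n ≠ 0) (hT : T 1 = n) (hS : S 1 = n)
    (hφ : ∀ x y, S (φ x * φ y) = T (x * y)) {x x' : A} {y y' : B}
    (hy : perpMap S n y = φ ((perpMap T n).rangeRestrict x))
    (hy' : perpMap S n y' = φ ((perpMap T n).rangeRestrict x')) :
    T x * T x' ≡ S y * S y' [ZMOD n] := by
  refine Int.modEq_iff_dvd.2 ⟨S (y * y') - T (x * x'), ?_⟩
  linear_combination -mul_trace_mul_sub_eq_of_perpMap_eq hn hT hS hφ hy hy'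

variable (φ) in
/-- Exactly the condition for `φ (P x) + ε tr x` to be divisible by `n` for every `x`. -/
def TraceCongruence (ε : ℤˣ) : Prop :=
  ∀ x y, perpMap S n y = φ ((perpMap T n).rangeRestrict x) → S y ≡ ε * T x [ZMOD n]

theorem exists_traceCongruence (hn : 2 < n) [IsCyclic (ZMod n)ˣ] (hT : T 1 = n) (hS : S 1 = n)
    (hφ : ∀ x y, S (φ x * φ y) = T (x * y)) (hT₀ : ∃ x₀, T x₀ = 1) :
    ∃ ε : ℤˣ, TraceCongruence φ ε := by
  obtain ⟨x₀, hx₀⟩ := hT₀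
  obtain ⟨y₀, hy₀⟩ := (φ ((perpMap T n).rangeRestrict x₀)).2
  have hn0 : n ≠ 0 := by omega
  have ha : (S y₀ : ZMod n) * S y₀ = 1 := by
    have hcongr := trace_mul_trace_modEq_of_perpMap_eq hn0 hT hS hφ hy₀ hy₀
    rw [hx₀, ← ZMod.intCast_eq_intCast_iff] at hcongr
    push_cast at hcongr
    exact hcongr.symm
  obtain ⟨ε, hε⟩ : ∃ ε : ℤˣ, (S y₀ : ZMod n) = (ε : ℤ) := by
    rcases ZMod.eq_one_or_eq_neg_one_of_mul_self_eq_one hn ha with h | h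
    · exact ⟨1, by simp [h]⟩
    · exact ⟨-1, by simp [h]⟩
  refine ⟨ε, fun x y hy => ?_⟩
  have hcongr := trace_mul_trace_modEq_of_perpMap_eq hn0 hT hS hφ hy hy₀
  rw [hx₀, ← ZMod.intCast_eq_intCast_iff] at hcongr
  rw [← ZMod.intCast_eq_intCast_iff]
  push_cast at hcongr ⊢
  rw [← hε]
  linear_combination -(S y : ZMod n) * ha - S y₀ * hcongr

theorem TraceCongruence.symm {ε : ℤˣ} (hε : TraceCongruence φ ε) :
    TraceCongruence φ.symm ε := by
  intro y x hx
  have hy : perpMap S n y = φ ((perpMap T n).rangeRestrict x) := by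
    rw [show (perpMap T n).rangeRestrict x = _ from Subtype.ext hx, φ.apply_symm_apply]
    rfl
  calc T x = ε * (ε * T x) := by rw [← mul_assoc, ← Units.val_mul, Int.units_mul_self]; simp
    _ ≡ ε * S y [ZMOD n] := ((hε x y hy).symm.mul_left _)

theorem TraceCongruence.exists_smul_eq {ε : ℤˣ} (hε : TraceCongruence φ ε) (x : A) :
    ∃ z : B, (n : ℤ) • z = φ ((perpMap T n).rangeRestrict x) + T x • (ε : ℤ) • (1 : B) := by
  obtain ⟨y, hy⟩ := (φ ((perpMap T n).rangeRestrict x)).2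
  obtain ⟨t, ht⟩ := (hε x y hy).symm.dvd
  refine ⟨y - t • 1, ?_⟩
  rw [← hy, perpMap_apply, smul_sub, smul_smul, ← ht, zsmul_eq_mul, zsmul_eq_mul, zsmul_eq_mul]
  push_cast
  ring

variable [IsAddTorsionFree B]

variable (φ) in
/-- `x ↦ (φ (P x) + ε tr x) / n`: the `ℚ`-linear extension of `φ` sending `1` to `ε`. -/
noncomputable def perpExtension (hn : n ≠ 0) {ε : ℤˣ} (hε : TraceCongruence φ ε) :
    A →ₗ[ℤ] B :=
  ((range (perpMap S n)).subtype ∘ₗ φ.toLinearMap ∘ₗ (perpMap T n).rangeRestrict +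
    T.smulRight ((ε : ℤ) • (1 : B))).exactDiv (Int.natCast_ne_zero.2 hn) hε.exists_smul_eq

variable (hn : n ≠ 0) {ε : ℤˣ} (hε : TraceCongruence φ ε)

theorem smul_perpExtension (x : A) :
    (n : ℤ) • perpExtension φ hn hε x =
      φ ((perpMap T n).rangeRestrict x) + T x • (ε : ℤ) • (1 : B) :=
  LinearMap.smul_exactDiv _ _ _ x

theorem trace_perpExtension (hS : S 1 = n) (x : A) : S (perpExtension φ hn hε x) = ε * T x := by
  refine mul_left_cancel₀ (Int.natCast_ne_zero.2 hn) ?_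
  have h := congrArg S (smul_perpExtension hn hε x)
  rw [map_zsmul, map_add, map_zsmul, map_zsmul, trace_eq_zero_of_mem_range_perpMap hS (φ _).2,
    hS] at h
  simp only [smul_eq_mul, zero_add] at h
  rw [h]
  ring

theorem perpMap_perpExtension (hS : S 1 = n) (x : A) :
    perpMap S n (perpExtension φ hn hε x) = φ ((perpMap T n).rangeRestrict x) := by
  rw [perpMap_apply, smul_perpExtension, trace_perpExtension hn hε hS, add_sub_assoc, smul_smul,
    mul_comm, sub_self, add_zero]

theorem perpExtension_symm_perpExtension [IsAddTorsionFree A] (hS : S 1 = n)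
    (x : A) : perpExtension φ.symm hn hε.symm (perpExtension φ hn hε x) = x := by
  refine zsmul_right_injective (Int.natCast_ne_zero.2 hn) ?_
  have hrange : (perpMap S n).rangeRestrict (perpExtension φ hn hε x) =
      φ ((perpMap T n).rangeRestrict x) :=
    Subtype.ext (perpMap_perpExtension hn hε hS x)
  dsimp only
  rw [smul_perpExtension, hrange, φ.symm_apply_apply, trace_perpExtension hn hε hS, smul_smul,
    mul_right_comm, ← Units.val_mul, Int.units_mul_self, Units.val_one, one_mul]
  simp

theorem trace_perpExtension_mul_perpExtension (hT : T 1 = n) (hS : S 1 = n)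
    (hφ : ∀ x y, S (φ x * φ y) = T (x * y)) (x x' : A) :
    S (perpExtension φ hn hε x * perpExtension φ hn hε x') = T (x * x') := by
  have key := mul_trace_mul_sub_eq_of_perpMap_eq hn hT hS hφ (perpMap_perpExtension hn hε hS x)
    (perpMap_perpExtension hn hε hS x')
  have hεε : (ε : ℤ) * ε = 1 := by rw [← Units.val_mul, Int.units_mul_self, Units.val_one]
  rw [trace_perpExtension hn hε hS, trace_perpExtension hn hε hS] at key
  refine mul_left_cancel₀ (Int.natCast_ne_zero.2 hn) ?_
  linear_combination key + T x * T x' * hεε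

theorem perpExtension_coe (hT : T 1 = n) (v : range (perpMap T n)) :
    perpExtension φ hn hε v = φ v := by
  refine zsmul_right_injective (Int.natCast_ne_zero.2 hn) ?_
  have hv : T v = 0 := trace_eq_zero_of_mem_range_perpMap hT v.2
  have hPv : (perpMap T n).rangeRestrict v = (n : ℤ) • v :=
    Subtype.ext (perpMap_of_trace_eq_zero hv)
  dsimp only
  rw [smul_perpExtension, hv, zero_smul, add_zero, hPv, map_zsmul]
  rfl

variable [IsAddTorsionFree A]

variable (φ) in
noncomputable def perpExtensionEquiv (hT : T 1 = n) (hS : S 1 = n) : A ≃ₗ[ℤ] B :=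
  LinearEquiv.ofLinearMap (perpExtension φ hn hε) (perpExtension φ.symm hn hε.symm)
    (LinearMap.ext (perpExtension_symm_perpExtension (φ := φ.symm) hn hε.symm hT))
    (LinearMap.ext (perpExtension_symm_perpExtension hn hε hS))

end Extension

theorem exists_isometry_extension {A B : Type*} [CommRing A] [CommRing B] [IsAddTorsionFree A]
    [IsAddTorsionFree B] {T : A →ₗ[ℤ] ℤ} {S : B →ₗ[ℤ] ℤ} {n : ℕ} (hn : 2 < n)
    [IsCyclic (ZMod n)ˣ] (hT : T 1 = n) (hS : S 1 = n) (hT₀ : ∃ x₀, T x₀ = 1)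
    (φ : LinearMap.range (perpMap T n) ≃ₗ[ℤ] LinearMap.range (perpMap S n))
    (hφ : ∀ x y, S (φ x * φ y) = T (x * y)) :
    ∃ ψ : A ≃ₗ[ℤ] B, (∀ x y, S (ψ x * ψ y) = T (x * y)) ∧
      ∀ v : LinearMap.range (perpMap T n), ψ v = φ v := by
  obtain ⟨ε, hε⟩ := exists_traceCongruence hn hT hS hφ hT₀
  have hn0 : n ≠ 0 := by omega
  exact ⟨perpExtensionEquiv φ hn0 hε hT hS, trace_perpExtension_mul_perpExtension hn0 hε hT hS hφ,
    perpExtension_coe hn0 hε hT⟩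

theorem NumberField.RingOfIntegers.trace_one (K : Type*) [Field K] [NumberField K] :
    Algebra.trace ℤ (𝓞 K) 1 = Module.finrank ℚ K := by
  rw [← map_one (algebraMap ℤ (𝓞 K)), Algebra.trace_algebraMap, RingOfIntegers.rank, nsmul_one]

/-- If `(ℤ/nℤ)ˣ` is cyclic, `K` has degree `n ≥ 3` and `tr_{K/ℚ}(O_K) = ℤ`, then every
isometry `(O_K^⊥, tr) → (O_L^⊥, tr)` extends to an isometry `(O_K, tr) → (O_L, tr)`. -/
theorem stmt_16 (n : ℕ) (hn : 3 ≤ n) (hcyc : IsCyclic (ZMod n)ˣ)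
    (K L : Type*) [Field K] [NumberField K] [Field L] [NumberField L]
    (hdeg : Module.finrank ℚ K = n)
    (htr : LinearMap.range (Algebra.trace ℤ (𝓞 K)) = ⊤)
    (fK : 𝓞 K →ₗ[ℤ] 𝓞 K)
    (hfK : ∀ x : 𝓞 K, fK x = n • x - (Algebra.trace ℤ (𝓞 K) x) • (1 : 𝓞 K))
    (fL : 𝓞 L →ₗ[ℤ] 𝓞 L)
    (hfL : ∀ x : 𝓞 L, fL x = (Module.finrank ℚ L) • x -
      (Algebra.trace ℤ (𝓞 L) x) • (1 : 𝓞 L))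
    (φ : LinearMap.range fK ≃ₗ[ℤ] LinearMap.range fL)
    (hφ : ∀ x y : LinearMap.range fK,
      Algebra.trace ℤ (𝓞 L) ((φ x : 𝓞 L) * (φ y : 𝓞 L)) =
        Algebra.trace ℤ (𝓞 K) ((x : 𝓞 K) * (y : 𝓞 K))) :
    ∃ ψ : 𝓞 K ≃ₗ[ℤ] 𝓞 L,
      (∀ x y : 𝓞 K, Algebra.trace ℤ (𝓞 L) (ψ x * ψ y) =
        Algebra.trace ℤ (𝓞 K) (x * y)) ∧
      (∀ x : LinearMap.range fK, ψ (x : 𝓞 K) = (φ x : 𝓞 L)) := by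
  have hT := RingOfIntegers.trace_one K
  have hS := RingOfIntegers.trace_one L
  rw [hdeg] at hT
  have hK : fK = perpMap (Algebra.trace ℤ (𝓞 K)) n :=
    LinearMap.ext fun x => by rw [hfK, perpMap_apply, natCast_zsmul]
  have hL : fL = perpMap (Algebra.trace ℤ (𝓞 L)) (Module.finrank ℚ L) :=
    LinearMap.ext fun x => by rw [hfL, perpMap_apply, natCast_zsmul]
  have hdegL : Module.finrank ℚ L = n := by
    have hrange := φ.finrank_eq
    have hrankK := finrank_range_perpMap_add_one (by omega) hT
    have hrankL := finrank_range_perpMap_add_one (by simp [Module.finrank_pos.ne']) hS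
    rw [RingOfIntegers.rank] at hrankK hrankL
    rw [hK, hL] at hrange
    omega
  rw [hdegL] at hL hS
  subst hK hL
  exact exists_isometry_extension hn hT hS (LinearMap.range_eq_top.1 htr 1) φ hφ
end

section
/- Let n ≥ 3 with (ℤ/nℤ)^× cyclic, and let K be a number field of degree n with tr_{K/ℚ}(O_K) = ℤ and gcd(n, Disc(K)) = 1. Then for any number field L, every isometry (O_K^0, tr_{K/ℚ}) → (O_L^0, tr_{L/ℚ}) extends to an isometry (O_K, tr_{K/ℚ}) → (O_L, tr_{L/ℚ}). -/
open NumberField Module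

section Helpers

variable {M : Type*} [AddCommGroup M]

/-- Splitting of a `ℤ`-module along a linear functional taking value `1`. -/
noncomputable def splitEquiv (t : M →ₗ[ℤ] ℤ) (e : M) (he : t e = 1) :
    M ≃ₗ[ℤ] ℤ × LinearMap.ker t where
  toFun x := (t x, ⟨x - t x • e, by simp [LinearMap.mem_ker, he]⟩)
  map_add' x y := by
    refine Prod.ext (by simp) (Subtype.ext ?_)
    show x + y - t (x + y) • e = (x - t x • e) + (y - t y • e)
    rw [map_add, add_smul]; abel
  map_smul' a x := by
    refine Prod.ext (by simp) (Subtype.ext ?_)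
    show a • x - t (a • x) • e = a • (x - t x • e)
    rw [map_smul, smul_sub, smul_eq_mul, mul_smul]
  invFun p := p.1 • e + (p.2 : M)
  left_inv x := by
    show t x • e + (x - t x • e) = x
    abel
  right_inv p := by
    obtain ⟨a, v⟩ := p
    have hv : t (v : M) = 0 := v.2
    refine Prod.ext (by simp [he, hv, mul_comm]) (Subtype.ext ?_)
    show a • e + (v : M) - t (a • e + (v : M)) • e = (v : M)
    rw [map_add, map_smul, hv, smul_eq_mul, he, mul_one, add_zero]
    abel

lemma finrank_ker_eq (t : M →ₗ[ℤ] ℤ) [Module.Free ℤ M] [Module.Finite ℤ M]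
    [NoZeroSMulDivisors ℤ M] (e : M) (he : t e = 1) :
    finrank ℤ M = 1 + finrank ℤ (LinearMap.ker t) := by
  haveI h1 : Module.Finite ℤ (LinearMap.ker t) := by
    exact Module.Finite.iff_fg.mpr (IsNoetherian.noetherian _)
  haveI h2 : NoZeroSMulDivisors ℤ (LinearMap.ker t) := by
    constructor
    intro c x h
    have : c • (x : M) = 0 := by
      have := congrArg (Subtype.val) h
      simpa using this
    rcases smul_eq_zero.mp this with h | h
    · exact Or.inl h
    · exact Or.inr (Subtype.ext (by simpa using h))
  haveI h3 : Module.Free ℤ (LinearMap.ker t) := by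
    exact Module.free_of_finite_type_torsion_free'
  rw [(splitEquiv t e he).finrank_eq, Module.finrank_prod, finrank_self]

end Helpers

lemma trace_dual (K : Type*) [Field K] [NumberField K] :
    ∃ c : Module.Free.ChooseBasisIndex ℤ (𝓞 K) → 𝓞 K,
      ∀ x : 𝓞 K, (discr K) • x =
        ∑ i, (Algebra.trace ℤ (𝓞 K) (x * (RingOfIntegers.basis K) i)) • c i := by
  classical
  set b := RingOfIntegers.basis K with hb
  set G := Algebra.traceMatrix ℤ (⇑b) with hG
  refine ⟨fun i => ∑ j, (G.adjugate i j) • b j, ?_⟩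
  have hmaps : ((discr K) • LinearMap.id : 𝓞 K →ₗ[ℤ] 𝓞 K)
      = ∑ i, ((Algebra.trace ℤ (𝓞 K)).comp (LinearMap.mulRight ℤ (b i))).smulRight
          (∑ j, (G.adjugate i j) • b j) := by
    apply b.ext
    intro l
    simp only [LinearMap.smul_apply, LinearMap.id_apply, LinearMap.sum_apply,
      LinearMap.smulRight_apply, LinearMap.comp_apply, LinearMap.mulRight_apply]
    symm
    have h1 : ∀ i, Algebra.trace ℤ (𝓞 K) (b l * b i) = G l i := fun i => by
      rw [hG, Algebra.traceMatrix_apply, Algebra.traceForm_apply]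
    calc ∑ i, Algebra.trace ℤ (𝓞 K) (b l * b i) • ∑ j, G.adjugate i j • b j
        = ∑ i, ∑ j, (G l i * G.adjugate i j) • b j := by
          refine Finset.sum_congr rfl fun i _ => ?_
          rw [h1 i, Finset.smul_sum]
          refine Finset.sum_congr rfl fun j _ => ?_
          rw [smul_smul]
      _ = ∑ j, (∑ i, G l i * G.adjugate i j) • b j := by
          rw [Finset.sum_comm]
          refine Finset.sum_congr rfl fun j _ => ?_
          rw [Finset.sum_smul]
      _ = ∑ j, ((G * G.adjugate) l j) • b j := by
          refine Finset.sum_congr rfl fun j _ => ?_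
          rw [Matrix.mul_apply]
      _ = ∑ j, ((G.det • (1 : Matrix _ _ ℤ)) l j) • b j := by rw [Matrix.mul_adjugate]
      _ = NumberField.discr K • b l := by
          rw [Finset.sum_eq_single l]
          · simp [hG, Algebra.discr_def, hb]
          · intro j _ hj
            simp [Matrix.one_apply, Ne.symm hj]
          · intro h
            exact absurd (Finset.mem_univ l) h
  intro x
  have := DFunLike.congr_fun hmaps x
  simpa using this

lemma reduce_mod (K : Type*) [Field K] [NumberField K] (ν : ℤ)
    (hcop : IsCoprime ν (discr K)) (y : 𝓞 K)
    (hdvd : ∀ x : 𝓞 K, ν ∣ Algebra.trace ℤ (𝓞 K) (y * x)) :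
    ∃ z : 𝓞 K, y = ν • z := by
  obtain ⟨c, hc⟩ := trace_dual K
  choose k hk using fun i => hdvd ((RingOfIntegers.basis K) i)
  obtain ⟨a₁, a₂, ha⟩ := hcop
  refine ⟨a₁ • y + a₂ • (∑ i, k i • c i), ?_⟩
  have h1 : (discr K) • y = ν • ∑ i, k i • c i := by
    rw [hc y, Finset.smul_sum]
    refine Finset.sum_congr rfl fun i _ => ?_
    rw [hk i, mul_smul]
  calc y = (a₁ * ν + a₂ * discr K) • y := by rw [ha, one_smul]
    _ = ν • (a₁ • y) + a₂ • ((discr K) • y) := by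
        rw [add_smul, mul_smul, mul_smul, smul_comm a₁ ν]
    _ = ν • (a₁ • y) + ν • (a₂ • ∑ i, k i • c i) := by rw [h1, smul_comm a₂ ν]
    _ = ν • (a₁ • y + a₂ • ∑ i, k i • c i) := by rw [smul_add]

lemma mul_expand {R : Type*} [CommRing R] (a b : ℤ) (g u v : R) :
    (a • g + u) * (b • g + v)
      = (a * b) • (g * g) + a • (g * v) + b • (u * g) + u * v := by
  simp only [zsmul_eq_mul]
  push_cast
  ring

lemma sq_root_cases {n : ℕ} (hn : 3 ≤ n) (hcyc : IsCyclic (ZMod n)ˣ) (x : ZMod n)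
    (hx : x * x = 1) : x = 1 ∨ x = -1 := by
  haveI : NeZero n := ⟨by omega⟩
  haveI : Fact (2 < n) := ⟨by omega⟩
  classical
  by_contra hcon
  push_neg at hcon
  obtain ⟨h1, h2⟩ := hcon
  set u : (ZMod n)ˣ := ⟨x, x, hx, hx⟩ with hu
  have hu2 : u ^ 2 = 1 := by
    rw [pow_two]
    exact Units.ext (by simpa using hx)
  have hle := IsCyclic.card_pow_eq_one_le (α := (ZMod n)ˣ) (n := 2) (by norm_num)
  have hne : (-1 : (ZMod n)ˣ) ≠ 1 := by
    intro h
    exact ZMod.neg_one_ne_one (by simpa using congrArg Units.val h)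
  have hu1 : u ≠ 1 := fun h => h1 (by simpa [hu] using congrArg Units.val h)
  have hum1 : u ≠ -1 := fun h => h2 (by simpa [hu] using congrArg Units.val h)
  have hsub : ({1, -1, u} : Finset (ZMod n)ˣ) ⊆
      Finset.univ.filter (fun a : (ZMod n)ˣ => a ^ 2 = 1) := by
    intro a ha
    simp only [Finset.mem_insert, Finset.mem_singleton] at ha
    have : a ^ 2 = 1 := by
      rcases ha with rfl | rfl | rfl
      · simp
      · simp
      · exact hu2
    simp [Finset.mem_filter, this]
  have hcard : ({1, -1, u} : Finset (ZMod n)ˣ).card = 3 := by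
    rw [Finset.card_insert_of_notMem (by simp [hne.symm, Ne.symm hu1]),
      Finset.card_insert_of_notMem (by simp [Ne.symm hum1]), Finset.card_singleton]
  have h5 : (Finset.univ.filter (fun a : (ZMod n)ˣ => a ^ 2 = 1)).card ≤ 2 := by
    simpa using hle
  have := (Finset.card_le_card hsub).trans h5
  omega

set_option maxHeartbeats 1000000 in
/-- If `(ℤ/nℤ)ˣ` is cyclic, `K` has degree `n ≥ 3`, `tr_{K/ℚ}(O_K) = ℤ` and
`gcd(n, Disc K) = 1`, then every isometry `(O_K^0, tr) → (O_L^0, tr)` extends to an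
isometry `(O_K, tr) → (O_L, tr)`. -/
theorem stmt_17 (n : ℕ) (hn : 3 ≤ n) (hcyc : IsCyclic (ZMod n)ˣ)
    (K L : Type*) [Field K] [NumberField K] [Field L] [NumberField L]
    (hdeg : Module.finrank ℚ K = n)
    (htr : LinearMap.range (Algebra.trace ℤ (𝓞 K)) = ⊤)
    (hcop : IsCoprime (n : ℤ) (NumberField.discr K))
    (φ : LinearMap.ker (Algebra.trace ℤ (𝓞 K)) ≃ₗ[ℤ]
          LinearMap.ker (Algebra.trace ℤ (𝓞 L)))
    (hφ : ∀ x y : LinearMap.ker (Algebra.trace ℤ (𝓞 K)),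
      Algebra.trace ℤ (𝓞 L) ((φ x : 𝓞 L) * (φ y : 𝓞 L)) =
        Algebra.trace ℤ (𝓞 K) ((x : 𝓞 K) * (y : 𝓞 K))) :
    ∃ ψ : 𝓞 K ≃ₗ[ℤ] 𝓞 L,
      (∀ x y : 𝓞 K, Algebra.trace ℤ (𝓞 L) (ψ x * ψ y) =
        Algebra.trace ℤ (𝓞 K) (x * y)) ∧
      (∀ x : LinearMap.ker (Algebra.trace ℤ (𝓞 K)), ψ (x : 𝓞 K) = (φ x : 𝓞 L)) := by
  classical
  revert hφ
  revert φ
  set tA := Algebra.trace ℤ (𝓞 K) with htAdef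
  set tB := Algebra.trace ℤ (𝓞 L) with htBdef
  intro φ hφ
  obtain ⟨e, he⟩ : ∃ e : 𝓞 K, tA e = 1 := by
    have h1 : (1 : ℤ) ∈ LinearMap.range tA := by rw [htr]; trivial
    exact h1
  have hrankA : finrank ℤ (𝓞 K) = n := by
    rw [NumberField.RingOfIntegers.rank, hdeg]
  have hkerA : finrank ℤ (𝓞 K) = 1 + finrank ℤ (LinearMap.ker tA) := finrank_ker_eq tA e he
  have htA1 : tA (1 : 𝓞 K) = (n : ℤ) := by
    rw [htAdef, show (1 : 𝓞 K) = algebraMap ℤ (𝓞 K) 1 from (map_one _).symm,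
      Algebra.trace_algebraMap]
    simp [hrankA]
  -- the projection onto the trace-zero part of 𝓞 K
  have hpKmem : ∀ x : 𝓞 K, x - tA x • e ∈ LinearMap.ker tA := fun x => by
    rw [LinearMap.mem_ker, map_sub, map_smul, he, smul_eq_mul, mul_one, sub_self]
  set pK : 𝓞 K →ₗ[ℤ] LinearMap.ker tA :=
    LinearMap.codRestrict _ (LinearMap.id - tA.smulRight e) (fun x => by simpa using hpKmem x)
    with hpKdef
  have hpK : ∀ x : 𝓞 K, (pK x : 𝓞 K) = x - tA x • e := fun x => rfl
  -- the key trace identity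
  have hkey : ∀ (v : LinearMap.ker tA) (x : 𝓞 K),
      tA (((v : 𝓞 K) - (tA ((v : 𝓞 K) * e)) • 1) * x)
        = tB ((φ v : 𝓞 L) * (φ (pK x) : 𝓞 L)) := by
    intro v x
    rw [hφ v (pK x), hpK]
    have hexp : ((v : 𝓞 K) - (tA ((v : 𝓞 K) * e)) • 1) * x
        = (v : 𝓞 K) * x - (tA ((v : 𝓞 K) * e)) • x := by
      rw [sub_mul, smul_mul_assoc, one_mul]
    have hexp2 : (v : 𝓞 K) * (x - tA x • e) = (v : 𝓞 K) * x - (tA x) • ((v : 𝓞 K) * e) := by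
      rw [mul_sub, mul_smul_comm]
    rw [hexp, hexp2, map_sub, map_sub, map_smul, map_smul, smul_eq_mul, smul_eq_mul]
    ring
  -- Step 1 : the trace of 𝓞 L is surjective
  obtain ⟨f, hf⟩ : ∃ f : 𝓞 L, tB f = 1 := by
    obtain ⟨m, hm⟩ : ∃ m : ℤ, LinearMap.range tB = Submodule.span ℤ {m} :=
      ⟨_, (Submodule.IsPrincipal.span_singleton_generator _).symm⟩
    have hmem : ∀ x : 𝓞 L, m ∣ tB x := fun x => by
      have hx : tB x ∈ Submodule.span ℤ {m} := hm ▸ LinearMap.mem_range_self tB x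
      obtain ⟨a, ha⟩ := Submodule.mem_span_singleton.mp hx
      exact ⟨a, by rw [← ha]; rw [smul_eq_mul]; ring⟩
    have htrB1 : tB (1 : 𝓞 L) = (finrank ℤ (𝓞 L) : ℤ) := by
      rw [htBdef, show (1 : 𝓞 L) = algebraMap ℤ (𝓞 L) 1 from (map_one _).symm,
        Algebra.trace_algebraMap]
      simp
    by_cases hm0 : m = 0
    · exfalso
      have h1 : tB (1 : 𝓞 L) = 0 := by
        have := hmem 1
        rw [hm0] at this
        simpa using this
      have hzB : tB = 0 := by
        ext x
        have := hmem x
        rw [hm0] at this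
        simpa using this
      have hker : LinearMap.ker tB = ⊤ := by rw [hzB]; exact LinearMap.ker_zero
      have h3 : finrank ℤ (𝓞 L) = finrank ℤ (LinearMap.ker tB) := by
        rw [hker]
        exact (finrank_top ℤ (𝓞 L)).symm
      have h4 : finrank ℤ (LinearMap.ker tA) = finrank ℤ (LinearMap.ker tB) := φ.finrank_eq
      have h5 : (finrank ℤ (𝓞 L) : ℤ) = 0 := by rw [← htrB1, h1]
      have h6 : finrank ℤ (𝓞 L) = 0 := by exact_mod_cast h5
      omega
    · have hrankB : finrank ℤ (𝓞 L) = n := by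
        set eqv := LinearEquiv.toSpanNonzeroSingleton ℤ ℤ m hm0 with heqv
        set tBr : 𝓞 L →ₗ[ℤ] Submodule.span ℤ {m} :=
          tB.codRestrict _ (fun x => hm ▸ LinearMap.mem_range_self tB x) with htBr
        set tB' : 𝓞 L →ₗ[ℤ] ℤ := eqv.symm.toLinearMap ∘ₗ tBr with htB'
        have hker' : LinearMap.ker tB' = LinearMap.ker tB := by
          ext x
          constructor
          · intro hx
            have h1 : eqv.symm (tBr x) = 0 := hx
            have h2 : tBr x = 0 := by
              have := congrArg eqv h1
              simpa using this
            have h3 : tB x = 0 := by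
              have := congrArg (Subtype.val) h2
              simpa [htBr] using this
            exact h3
          · intro hx
            have h1 : tB x = 0 := hx
            have h2 : tBr x = 0 := Subtype.ext (by simpa [htBr] using h1)
            show eqv.symm (tBr x) = 0
            rw [h2, map_zero]
        obtain ⟨x₀, hx₀⟩ : ∃ x₀, tB x₀ = m := by
          have : m ∈ LinearMap.range tB := by
            rw [hm]; exact Submodule.mem_span_singleton_self m
          exact this
        have hx₀' : tB' x₀ = 1 := by
          have h1 : tBr x₀ = eqv 1 := by
            refine Subtype.ext ?_
            rw [heqv]
            simp [htBr, hx₀, LinearEquiv.toSpanNonzeroSingleton]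
          show eqv.symm (tBr x₀) = 1
          rw [h1, LinearEquiv.symm_apply_apply]
        have h2 := finrank_ker_eq tB' x₀ hx₀'
        rw [hker'] at h2
        have h4 : finrank ℤ (LinearMap.ker tA) = finrank ℤ (LinearMap.ker tB) := φ.finrank_eq
        omega
      have htB1 : tB (1 : 𝓞 L) = (n : ℤ) := by rw [htrB1, hrankB]
      have hmn : m ∣ (n : ℤ) := by
        have := hmem 1
        rwa [htB1] at this
      by_cases hmu : IsUnit m
      · have h1 : (1 : ℤ) ∈ Submodule.span ℤ {m} := by
          rcases Int.isUnit_iff.mp hmu with rfl | rfl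
          · exact Submodule.mem_span_singleton_self 1
          · exact Submodule.mem_span_singleton.mpr ⟨-1, by norm_num⟩
        have h2 : (1 : ℤ) ∈ LinearMap.range tB := by rw [hm]; exact h1
        exact h2
      · exfalso
        set q := m.natAbs.minFac with hqdef
        have hq : q.Prime :=
          Nat.minFac_prime (fun h => hmu (Int.isUnit_iff_natAbs_eq.mpr h))
        have hqm : (q : ℤ) ∣ m := by
          refine dvd_trans ?_ (Int.natAbs_dvd.mpr dvd_rfl)
          exact_mod_cast Nat.minFac_dvd m.natAbs
        have hqtB : ∀ x : 𝓞 L, (q : ℤ) ∣ tB x := fun x => hqm.trans (hmem x)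
        have hqn : (q : ℤ) ∣ (n : ℤ) := hqm.trans hmn
        have hqd : IsCoprime (q : ℤ) (discr K) := hcop.of_isCoprime_of_dvd_left hqn
        have key : ∀ v : LinearMap.ker tA, ∃ (α : ℤ) (z : 𝓞 K),
            (v : 𝓞 K) = α • 1 + (q : ℤ) • z := by
          intro v
          have hdvd : ∀ x : 𝓞 K,
              (q : ℤ) ∣ tA (((v : 𝓞 K) - (tA ((v : 𝓞 K) * e)) • 1) * x) := fun x => by
            rw [hkey v x]; exact hqtB _
          obtain ⟨z, hz⟩ := reduce_mod K (q : ℤ) hqd _ hdvd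
          refine ⟨tA ((v : 𝓞 K) * e), z, ?_⟩
          rw [← hz]
          abel
        haveI : Fact q.Prime := ⟨hq⟩
        set bK := RingOfIntegers.basis K with hbK
        set χ : 𝓞 K →ₗ[ℤ] (Module.Free.ChooseBasisIndex ℤ (𝓞 K) → ZMod q) :=
          LinearMap.pi fun i => (Int.castAddHom (ZMod q)).toIntLinearMap ∘ₗ
            (Finsupp.lapply i) ∘ₗ bK.repr.toLinearMap with hχdef
        have hχ : ∀ (x : 𝓞 K) i, χ x i = ((bK.repr x i : ℤ) : ZMod q) := fun x i => rfl
        have hχq : ∀ z : 𝓞 K, χ ((q : ℤ) • z) = 0 := fun z => by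
          funext i
          rw [map_smul]
          show (q : ℤ) • (χ z i) = 0
          rw [zsmul_eq_mul]
          push_cast
          simp [ZMod.natCast_self]
        have hspan : ∀ x : 𝓞 K, χ x ∈ Submodule.span (ZMod q) {χ 1, χ e} := by
          intro x
          obtain ⟨α, z, hv⟩ := key (pK x)
          have hx2 : x = tA x • e + ((pK x : 𝓞 K)) := by rw [hpK]; abel
          rw [hv] at hx2
          have hsum : χ x = tA x • χ e + (α • χ 1 + (q : ℤ) • χ z) := by
            have h0 := congrArg χ hx2
            simpa only [map_add, map_smul] using h0
          have hq0 : (q : ℤ) • χ z = 0 := by rw [← map_smul]; exact hχq z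
          rw [hsum, hq0, add_zero]
          have m1 : χ e ∈ Submodule.span (ZMod q) {χ 1, χ e} :=
            Submodule.subset_span (by simp)
          have m2 : χ 1 ∈ Submodule.span (ZMod q) {χ 1, χ e} :=
            Submodule.subset_span (by simp)
          exact Submodule.add_mem _ (Submodule.smul_of_tower_mem _ _ m1)
            (Submodule.smul_of_tower_mem _ _ m2)
        have hsurj : Function.Surjective χ := by
          intro gfun
          refine ⟨∑ i, (ZMod.cast (gfun i) : ℤ) • bK i, ?_⟩
          funext i
          rw [hχ]
          have h1 := bK.repr_sum_self (fun i => (ZMod.cast (gfun i) : ℤ))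
          have h2 : bK.repr (∑ i, (ZMod.cast (gfun i) : ℤ) • bK i) i
              = (ZMod.cast (gfun i) : ℤ) := by rw [h1]
          rw [h2, ZMod.intCast_zmod_cast]
        have htop : Submodule.span (ZMod q) {χ 1, χ e} = ⊤ := by
          rw [eq_top_iff]
          rintro y -
          obtain ⟨x, rfl⟩ := hsurj y
          exact hspan x
        have hfr : finrank (ZMod q) (Module.Free.ChooseBasisIndex ℤ (𝓞 K) → ZMod q) = n := by
          rw [Module.finrank_pi, ← Module.finrank_eq_card_chooseBasisIndex, hrankA]
        have hle2 : finrank (ZMod q) (Module.Free.ChooseBasisIndex ℤ (𝓞 K) → ZMod q) ≤ 2 := by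
          have h2 := finrank_span_finset_le_card (R := ZMod q)
            ({χ 1, χ e} : Finset (Module.Free.ChooseBasisIndex ℤ (𝓞 K) → ZMod q))
          rw [Set.finrank] at h2
          have h3 : ((({χ 1, χ e} : Finset (Module.Free.ChooseBasisIndex ℤ (𝓞 K) → ZMod q))) :
              Set (Module.Free.ChooseBasisIndex ℤ (𝓞 K) → ZMod q)) = {χ 1, χ e} := by
            simp
          rw [h3, htop, finrank_top] at h2
          refine h2.trans ?_
          exact (Finset.card_insert_le _ _).trans (by simp)
        omega
  -- ranks and trace of 1 on the L side
  have hrankB : finrank ℤ (𝓞 L) = n := by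
    have h1 := finrank_ker_eq tB f hf
    have h2 : finrank ℤ (LinearMap.ker tA) = finrank ℤ (LinearMap.ker tB) := φ.finrank_eq
    omega
  have htB1 : tB (1 : 𝓞 L) = (n : ℤ) := by
    rw [htBdef, show (1 : 𝓞 L) = algebraMap ℤ (𝓞 L) 1 from (map_one _).symm,
      Algebra.trace_algebraMap]
    simp [hrankB]
  have hn0 : (n : ℤ) ≠ 0 := by
    have : n ≠ 0 := by omega
    exact_mod_cast this
  -- the elements w, s, w'
  set w : 𝓞 K := (n : ℤ) • e - 1 with hwdef
  have hwmem : w ∈ LinearMap.ker tA := by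
    rw [LinearMap.mem_ker, hwdef, map_sub, map_smul, he, htA1, smul_eq_mul, mul_one, sub_self]
  set s : 𝓞 L := (n : ℤ) • f - 1 with hsdef
  have hsmem : s ∈ LinearMap.ker tB := by
    rw [LinearMap.mem_ker, hsdef, map_sub, map_smul, hf, htB1, smul_eq_mul, mul_one, sub_self]
  set wV : LinearMap.ker tA := ⟨w, hwmem⟩ with hwV
  set sW : LinearMap.ker tB := ⟨s, hsmem⟩ with hsW
  set w' : LinearMap.ker tA := φ.symm sW with hw'def
  have hφw' : φ w' = sW := φ.apply_symm_apply sW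
  set c : ℤ := tA ((w' : 𝓞 K) * e) with hcdef
  have hw'0 : tA (w' : 𝓞 K) = 0 := w'.2
  -- divisibility by n
  have hdvd : ∀ x : 𝓞 K, (n : ℤ) ∣ tA (((w' : 𝓞 K) - c • 1) * x) := fun x => by
    rw [hcdef, hkey w' x, hφw']
    have hz0 : tB ((φ (pK x)) : 𝓞 L) = 0 := (φ (pK x)).2
    have hprod : (sW : 𝓞 L) * (φ (pK x) : 𝓞 L)
        = (n : ℤ) • (f * (φ (pK x) : 𝓞 L)) - (φ (pK x) : 𝓞 L) := by
      show s * _ = _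
      rw [hsdef, sub_mul, smul_mul_assoc, one_mul]
    rw [hprod, map_sub, map_smul, hz0, sub_zero, smul_eq_mul]
    exact Dvd.intro _ rfl
  obtain ⟨z, hz⟩ := reduce_mod K (n : ℤ) hcop _ hdvd
  have hw'eq : (w' : 𝓞 K) = c • 1 + (n : ℤ) • z := by rw [← hz]; abel
  have htAz : tA z = -c := by
    have h1 := congrArg tA hw'eq
    rw [hw'0, map_add, map_smul, map_smul, htA1, smul_eq_mul, smul_eq_mul] at h1
    have h2 : (n : ℤ) * (tA z + c) = 0 := by linarith
    rcases mul_eq_zero.mp h2 with h | h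
    · exact absurd h hn0
    · linarith
  -- the quadratic identity
  have hss : tB ((sW : 𝓞 L) * (sW : 𝓞 L)) = (n : ℤ) * (n : ℤ) * tB (f * f) - (n : ℤ) := by
    show tB (s * s) = _
    rw [hsdef]
    simp only [sub_mul, mul_sub, add_mul, mul_add, smul_mul_assoc, mul_smul_comm, smul_smul, smul_sub, smul_add, one_mul, mul_one, map_sub, map_smul, htB1, hf, smul_eq_mul]
    ring
  have hww : tA (w * w) = (n : ℤ) * (n : ℤ) * tA (e * e) - (n : ℤ) := by
    rw [hwdef]
    simp only [sub_mul, mul_sub, add_mul, mul_add, smul_mul_assoc, mul_smul_comm, smul_smul, smul_sub, smul_add, one_mul, mul_one, map_sub, map_smul, htA1, he, smul_eq_mul]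
    ring
  have hw'w' : tA ((w' : 𝓞 K) * (w' : 𝓞 K)) = (n : ℤ) * (n : ℤ) * tB (f * f) - (n : ℤ) := by
    have h := hφ w' w'
    rw [hφw'] at h
    rw [← h, hss]
  have hexpand : tA ((w' : 𝓞 K) * (w' : 𝓞 K))
      = c * c * (n : ℤ) + 2 * c * (n : ℤ) * tA z + (n : ℤ) * (n : ℤ) * tA (z * z) := by
    rw [hw'eq]
    simp only [sub_mul, mul_sub, add_mul, mul_add, smul_mul_assoc, mul_smul_comm, smul_smul, smul_sub, smul_add, one_mul, mul_one, map_add, map_smul, htA1, smul_eq_mul]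
    ring
  have hc2 : 1 - c * c = (n : ℤ) * (tB (f * f) - tA (z * z)) := by
    have hmain : (n : ℤ) * (1 - c * c)
        = (n : ℤ) * ((n : ℤ) * (tB (f * f) - tA (z * z))) := by
      have e1 := hw'w'
      have e2 := hexpand
      have e3 := htAz
      linear_combination e1 - e2 - 2 * c * (n : ℤ) * e3
    exact mul_left_cancel₀ hn0 hmain
  -- the sign ε
  have hcast : ((c : ℤ) : ZMod n) * ((c : ℤ) : ZMod n) = 1 := by
    have h0 : ((1 - c * c : ℤ) : ZMod n) = 0 := by
      rw [hc2]
      push_cast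
      simp [ZMod.natCast_self]
    push_cast at h0
    rw [sub_eq_zero] at h0
    exact h0.symm
  obtain ⟨ε, hε1, hεd⟩ : ∃ ε : ℤ, ε * ε = 1 ∧ (n : ℤ) ∣ (c + ε) := by
    rcases sq_root_cases hn hcyc _ hcast with h | h
    · refine ⟨-1, by norm_num, ?_⟩
      have h1 : ((c + -1 : ℤ) : ZMod n) = 0 := by push_cast [h]; ring
      exact (ZMod.intCast_zmod_eq_zero_iff_dvd _ _).mp h1
    · refine ⟨1, by norm_num, ?_⟩
      have h1 : ((c + 1 : ℤ) : ZMod n) = 0 := by push_cast [h]; ring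
      exact (ZMod.intCast_zmod_eq_zero_iff_dvd _ _).mp h1
  obtain ⟨t, ht⟩ := hεd
  -- the element z₀
  set z₀ : 𝓞 K := t • 1 + z - ε • e with hz₀def
  have hz₀ : (w' : 𝓞 K) - ε • w = (n : ℤ) • z₀ := by
    rw [hw'eq, hwdef, hz₀def]
    have hc' : c = (n : ℤ) * t - ε := by linarith
    rw [hc']
    simp only [smul_sub, smul_add, sub_smul, add_smul, smul_smul]
    rw [mul_comm ε (n : ℤ)]
    abel
  have hz₀mem : z₀ ∈ LinearMap.ker tA := by
    have h1 := congrArg tA hz₀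
    rw [map_sub, map_smul, map_smul, hw'0, LinearMap.mem_ker.mp hwmem, smul_eq_mul,
      smul_eq_mul, mul_zero, sub_zero] at h1
    have h2 : (n : ℤ) * tA z₀ = 0 := h1.symm
    rcases mul_eq_zero.mp h2 with h | h
    · exact absurd h hn0
    · exact LinearMap.mem_ker.mpr h
  set z₀V : LinearMap.ker tA := ⟨z₀, hz₀mem⟩ with hz₀V
  have hkerEq : w' - ε • wV = (n : ℤ) • z₀V := Subtype.ext (by
    show (w' : 𝓞 K) - ε • w = (n : ℤ) • z₀
    exact hz₀)
  have hφeq : (sW : 𝓞 L) - ε • ((φ wV : _) : 𝓞 L) = (n : ℤ) • ((φ z₀V : _) : 𝓞 L) := by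
    have h1 := congrArg φ hkerEq
    rw [map_sub, map_smul, map_smul, hφw'] at h1
    have h2 := congrArg (Subtype.val) h1
    simpa using h2
  -- the element g
  set g : 𝓞 L := ε • (f - ((φ z₀V : _) : 𝓞 L)) with hgdef
  have hng : (n : ℤ) • g = ε • (1 : 𝓞 L) + ((φ wV : _) : 𝓞 L) := by
    rw [hgdef]
    rw [smul_comm, smul_sub]
    have h2 : (n : ℤ) • f = 1 + s := by rw [hsdef]; abel
    rw [h2, hφeq.symm]
    have h4 : (1 : 𝓞 L) + s - (s - ε • ((φ wV : _) : 𝓞 L)) = 1 + ε • ((φ wV : _) : 𝓞 L) := by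
      abel
    rw [h4, smul_add, smul_smul, hε1, one_smul]
  have htg : tB g = ε := by
    have h0 : tB ((φ z₀V : _) : 𝓞 L) = 0 := (φ z₀V).2
    rw [hgdef, map_smul, map_sub, hf, h0, sub_zero, smul_eq_mul, mul_one]
  -- the two key identities for g
  have hgg : tB (g * g) = tA (e * e) := by
    have h0 : tB ((φ wV : _) : 𝓞 L) = 0 := (φ wV).2
    have hφwVwV : tB (((φ wV : _) : 𝓞 L) * ((φ wV : _) : 𝓞 L)) = tA (w * w) := hφ wV wV
    have hL : ((n : ℤ) • g) * ((n : ℤ) • g) = ((n : ℤ) * (n : ℤ)) • (g * g) := by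
      rw [smul_mul_assoc, mul_smul_comm, smul_smul]
    have e1 : tB (((n : ℤ) • g) * ((n : ℤ) • g)) = ((n : ℤ) * (n : ℤ)) * tB (g * g) := by
      rw [hL, map_smul, smul_eq_mul]
    have e2 : tB (((n : ℤ) • g) * ((n : ℤ) • g)) = ((n : ℤ) * (n : ℤ)) * tA (e * e) := by
      rw [hng]
      simp only [sub_mul, mul_sub, add_mul, mul_add, smul_mul_assoc, mul_smul_comm, smul_smul, smul_sub, smul_add, one_mul, mul_one, map_add, map_smul, htB1, hφwVwV, hww, h0, hε1, smul_eq_mul]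
      ring
    have h3 : ((n : ℤ) * (n : ℤ)) * tB (g * g) = ((n : ℤ) * (n : ℤ)) * tA (e * e) := by
      rw [← e1, e2]
    exact mul_left_cancel₀ (mul_ne_zero hn0 hn0) h3
  have hgv : ∀ v : LinearMap.ker tA,
      tB (g * ((φ v : _) : 𝓞 L)) = tA (e * (v : 𝓞 K)) := by
    intro v
    have hv0 : tA (v : 𝓞 K) = 0 := v.2
    have hφv0 : tB ((φ v : _) : 𝓞 L) = 0 := (φ v).2
    have e1 : tB (((n : ℤ) • g) * ((φ v : _) : 𝓞 L)) = (n : ℤ) * tB (g * ((φ v : _) : 𝓞 L)) := by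
      rw [smul_mul_assoc, map_smul, smul_eq_mul]
    have e2 : tB (((n : ℤ) • g) * ((φ v : _) : 𝓞 L)) = (n : ℤ) * tA (e * (v : 𝓞 K)) := by
      rw [hng]
      have h5 := hφ wV v
      simp only [sub_mul, mul_sub, add_mul, mul_add, smul_mul_assoc, mul_smul_comm, smul_smul, smul_sub, smul_add, one_mul, mul_one, map_add, map_smul, hφv0, h5, smul_eq_mul, mul_zero, zero_add]
      have hexp : w * (v : 𝓞 K) = (n : ℤ) • (e * (v : 𝓞 K)) - (v : 𝓞 K) := by
        rw [hwdef, sub_mul, smul_mul_assoc, one_mul]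
      rw [hexp, map_sub, map_smul, hv0, sub_zero, smul_eq_mul]
    have h3 : (n : ℤ) * tB (g * ((φ v : _) : 𝓞 L)) = (n : ℤ) * tA (e * (v : 𝓞 K)) := by
      rw [← e1, e2]
    exact mul_left_cancel₀ hn0 h3
  have hgv' : ∀ v : LinearMap.ker tA,
      tB (((φ v : _) : 𝓞 L) * g) = tA ((v : 𝓞 K) * e) := fun v => by
    rw [mul_comm, hgv v, mul_comm]
  -- construction of ψ
  have hpLmem : ∀ y : 𝓞 L, y - ((ε • tB) y) • g ∈ LinearMap.ker tB := fun y => by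
    rw [LinearMap.mem_ker, map_sub, map_smul, htg, LinearMap.smul_apply, smul_eq_mul,
      smul_eq_mul]
    have h1 : ε * tB y * ε = tB y := by
      calc ε * tB y * ε = tB y * (ε * ε) := by ring
        _ = tB y := by rw [hε1, mul_one]
    rw [h1, sub_self]
  set pL : 𝓞 L →ₗ[ℤ] LinearMap.ker tB := LinearMap.codRestrict _
      (LinearMap.id - ((ε • tB).smulRight g)) (fun y => by simpa using hpLmem y) with hpLdef
  have hpL : ∀ y : 𝓞 L, (pL y : 𝓞 L) = y - (ε * tB y) • g := fun y => rfl
  set ψ₀ : 𝓞 K →ₗ[ℤ] 𝓞 L :=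
    tA.smulRight g + (LinearMap.ker tB).subtype ∘ₗ (φ : LinearMap.ker tA →ₗ[ℤ] LinearMap.ker tB) ∘ₗ pK
    with hψ₀def
  set χ₀ : 𝓞 L →ₗ[ℤ] 𝓞 K :=
    ((ε • tB).smulRight e) + (LinearMap.ker tA).subtype ∘ₗ
      (φ.symm : LinearMap.ker tB →ₗ[ℤ] LinearMap.ker tA) ∘ₗ pL
    with hχ₀def
  have hψ₀ : ∀ x, ψ₀ x = tA x • g + ((φ (pK x) : _) : 𝓞 L) := fun x => rfl
  have hχ₀ : ∀ y, χ₀ y = (ε * tB y) • e + ((φ.symm (pL y) : _) : 𝓞 K) := fun y => rfl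
  have hεmul : ∀ a : ℤ, ε * (a * ε) = a := fun a => by
    calc ε * (a * ε) = a * (ε * ε) := by ring
      _ = a := by rw [hε1, mul_one]
  have hχψ : ∀ x, χ₀ (ψ₀ x) = x := by
    intro x
    have h0 : tB ((φ (pK x) : _) : 𝓞 L) = 0 := (φ (pK x)).2
    have h1 : tB (ψ₀ x) = tA x * ε := by
      rw [hψ₀, map_add, map_smul, htg, h0, add_zero, smul_eq_mul]
    have h2 : ε * tB (ψ₀ x) = tA x := by rw [h1, hεmul]
    have h3 : pL (ψ₀ x) = φ (pK x) := Subtype.ext (by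
      rw [hpL, h2, hψ₀]
      abel)
    rw [hχ₀, h2, h3, φ.symm_apply_apply, hpK]
    abel
  have hψχ : ∀ y, ψ₀ (χ₀ y) = y := by
    intro y
    have h0 : tA ((φ.symm (pL y) : _) : 𝓞 K) = 0 := (φ.symm (pL y)).2
    have h1 : tA (χ₀ y) = ε * tB y := by
      rw [hχ₀, map_add, map_smul, he, h0, add_zero, smul_eq_mul, mul_one]
    have h2 : pK (χ₀ y) = φ.symm (pL y) := Subtype.ext (by
      rw [hpK, h1, hχ₀]
      abel)
    rw [hψ₀, h1, h2, φ.apply_symm_apply, hpL]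
    abel
  refine ⟨LinearEquiv.ofLinear ψ₀ χ₀ (LinearMap.ext hψχ) (LinearMap.ext hχψ), ?_, ?_⟩
  · intro x y
    show tB (ψ₀ x * ψ₀ y) = tA (x * y)
    rw [hψ₀ x, hψ₀ y]
    have hx2 : x = tA x • e + ((pK x : _) : 𝓞 K) := by rw [hpK]; abel
    have hy2 : y = tA y • e + ((pK y : _) : 𝓞 K) := by rw [hpK]; abel
    have hprodL := mul_expand (tA x) (tA y) g ((φ (pK x) : _) : 𝓞 L) ((φ (pK y) : _) : 𝓞 L)
    have hprodR := mul_expand (tA x) (tA y) e ((pK x : _) : 𝓞 K) ((pK y : _) : 𝓞 K)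
    rw [hprodL]
    rw [map_add, map_add, map_add]
    rw [map_smul, map_smul, map_smul]
    rw [hgg, hgv (pK y), hgv' (pK x), hφ (pK x) (pK y)]
    conv_rhs => rw [hx2, hy2]
    rw [hprodR]
    rw [map_add, map_add, map_add]
    rw [map_smul, map_smul, map_smul]
  · intro v
    show ψ₀ (v : 𝓞 K) = ((φ v : _) : 𝓞 L)
    rw [hψ₀]
    have h0 : tA (v : 𝓞 K) = 0 := v.2
    have hpKv : pK (v : 𝓞 K) = v := Subtype.ext (by rw [hpK, h0, zero_smul, sub_zero])
    rw [h0, zero_smul, hpKv, zero_add]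
end

section
/- Let K and L be number fields of the same degree n with equal discriminant, suppose tr_{K/ℚ}(O_K) = ℤ = tr_{L/ℚ}(O_L), and let φ : (O_K^0, tr) → (O_L^0, tr) be an isometry. Fix γ_K ∈ O_K with tr(γ_K) = 1 and set γ_0 := 1 − n·γ_K ∈ O_K^0. Then the extension φ^+ (resp. φ^−) of φ sending 1 ↦ 1 (resp. 1 ↦ −1) maps O_K onto O_L if and only if φ(γ_0) ≡ 1 mod n·O_L (resp. φ(γ_0) ≡ −1 mod n·O_L). -/
open NumberField

section Aux

variable {K L : Type*} [Field K] [NumberField K] [Field L] [NumberField L]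

noncomputable def kerProj (γ : 𝓞 K) (e : ℤ) (h : Algebra.trace ℤ (𝓞 K) γ = e)
    (he : e * e = 1) : 𝓞 K →ₗ[ℤ] LinearMap.ker (Algebra.trace ℤ (𝓞 K)) :=
  LinearMap.codRestrict _ (LinearMap.id - (e • Algebra.trace ℤ (𝓞 K)).smulRight γ)
    (fun x => by
      simp only [LinearMap.mem_ker, LinearMap.sub_apply, LinearMap.id_apply,
        LinearMap.smulRight_apply, LinearMap.smul_apply, map_sub, map_smul, h,
        smul_eq_mul]
      linear_combination (-(Algebra.trace ℤ (𝓞 K) x)) * he)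

@[simp] lemma kerProj_apply (γ : 𝓞 K) (e : ℤ) (h : Algebra.trace ℤ (𝓞 K) γ = e)
    (he : e * e = 1) (x : 𝓞 K) :
    (kerProj γ e h he x : 𝓞 K) = x - (e * Algebra.trace ℤ (𝓞 K) x) • γ := by
  simp [kerProj, smul_smul, smul_eq_mul]

set_option maxHeartbeats 1000000 in
lemma exists_ext
    (φ : LinearMap.ker (Algebra.trace ℤ (𝓞 K)) ≃ₗ[ℤ] LinearMap.ker (Algebra.trace ℤ (𝓞 L)))
    (γK : 𝓞 K) (hγK : Algebra.trace ℤ (𝓞 K) γK = 1)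
    (γL : 𝓞 L) (e : ℤ) (he : e * e = 1) (hγL : Algebra.trace ℤ (𝓞 L) γL = e) :
    ∃ ψ : 𝓞 K ≃ₗ[ℤ] 𝓞 L, ∀ x : 𝓞 K,
      ψ x = (Algebra.trace ℤ (𝓞 K) x) • γL
        + ((φ (kerProj γK 1 hγK (by norm_num) x)) : 𝓞 L) := by
  set pK := kerProj γK 1 hγK (by norm_num) with hpK
  set pL := kerProj γL e hγL he with hpL
  have hker : ∀ w : LinearMap.ker (Algebra.trace ℤ (𝓞 L)),
      Algebra.trace ℤ (𝓞 L) (w : 𝓞 L) = 0 := fun w => w.2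
  have hkerK : ∀ w : LinearMap.ker (Algebra.trace ℤ (𝓞 K)),
      Algebra.trace ℤ (𝓞 K) (w : 𝓞 K) = 0 := fun w => w.2
  set f : 𝓞 K →ₗ[ℤ] 𝓞 L :=
    (Algebra.trace ℤ (𝓞 K)).smulRight γL
      + (LinearMap.ker (Algebra.trace ℤ (𝓞 L))).subtype ∘ₗ φ.toLinearMap ∘ₗ pK with hf
  set g : 𝓞 L →ₗ[ℤ] 𝓞 K :=
    (e • Algebra.trace ℤ (𝓞 L)).smulRight γK
      + (LinearMap.ker (Algebra.trace ℤ (𝓞 K))).subtype ∘ₗ φ.symm.toLinearMap ∘ₗ pL with hg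
  have hfapp : ∀ x, f x = (Algebra.trace ℤ (𝓞 K) x) • γL + ((φ (pK x)) : 𝓞 L) := by
    intro x; simp [hf]
  have hgapp : ∀ y, g y = (e * Algebra.trace ℤ (𝓞 L) y) • γK + ((φ.symm (pL y)) : 𝓞 K) := by
    intro y; simp [hg, smul_smul]
  have htrf : ∀ x, Algebra.trace ℤ (𝓞 L) (f x) = (Algebra.trace ℤ (𝓞 K) x) * e := by
    intro x
    rw [hfapp, map_add, map_smul, hγL, hker, add_zero, smul_eq_mul]
  have htrg : ∀ y, Algebra.trace ℤ (𝓞 K) (g y) = e * Algebra.trace ℤ (𝓞 L) y := by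
    intro y
    rw [hgapp, map_add, map_smul, hγK, hkerK, add_zero, smul_eq_mul, mul_one]
  have hpKg : ∀ y, pK (g y) = φ.symm (pL y) := by
    intro y
    refine Subtype.ext ?_
    rw [hpK, kerProj_apply, htrg, hgapp, one_mul]
    abel
  have hpLf : ∀ x, pL (f x) = φ (pK x) := by
    intro x
    refine Subtype.ext ?_
    rw [hpL, kerProj_apply, htrf, hfapp]
    have h1 : e * (Algebra.trace ℤ (𝓞 K) x * e) = Algebra.trace ℤ (𝓞 K) x := by
      linear_combination (Algebra.trace ℤ (𝓞 K) x) * he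
    rw [h1]
    abel
  have hfg : f ∘ₗ g = LinearMap.id := by
    apply LinearMap.ext; intro y
    simp only [LinearMap.comp_apply, LinearMap.id_apply]
    rw [hfapp, hpKg, LinearEquiv.apply_symm_apply, htrg, hpL, kerProj_apply]
    abel
  have hgf : g ∘ₗ f = LinearMap.id := by
    apply LinearMap.ext; intro x
    simp only [LinearMap.comp_apply, LinearMap.id_apply]
    rw [hgapp, hpLf, LinearEquiv.symm_apply_apply, htrf, hpK, kerProj_apply, one_mul]
    have h1 : e * (Algebra.trace ℤ (𝓞 K) x * e) = Algebra.trace ℤ (𝓞 K) x := by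
      linear_combination (Algebra.trace ℤ (𝓞 K) x) * he
    rw [h1]
    abel
  exact ⟨LinearEquiv.ofLinear f g hfg hgf, fun x => by
    rw [LinearEquiv.ofLinear_apply, hfapp]⟩

end Aux

/-- Let `K, L` have the same degree `n`, equal discriminants and surjective integral
traces, and let `φ : (O_K^0, tr) → (O_L^0, tr)` be an isometry. With `γ_K ∈ O_K` of
trace `1` and `γ_0 = 1 − n·γ_K`, the extension of `φ` with `1 ↦ 1` (resp. `1 ↦ −1`)
maps `O_K` onto `O_L` iff `φ(γ_0) ≡ 1 mod n·O_L` (resp. `φ(γ_0) ≡ −1 mod n·O_L`). -/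
theorem stmt_18 (K L : Type*) [Field K] [NumberField K] [Field L] [NumberField L]
    (n : ℕ) (hdegK : Module.finrank ℚ K = n) (hdegL : Module.finrank ℚ L = n)
    (hdisc : NumberField.discr K = NumberField.discr L)
    (htrK : LinearMap.range (Algebra.trace ℤ (𝓞 K)) = ⊤)
    (htrL : LinearMap.range (Algebra.trace ℤ (𝓞 L)) = ⊤)
    (φ : LinearMap.ker (Algebra.trace ℤ (𝓞 K)) ≃ₗ[ℤ]
          LinearMap.ker (Algebra.trace ℤ (𝓞 L)))
    (hφ : ∀ x y : LinearMap.ker (Algebra.trace ℤ (𝓞 K)),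
      Algebra.trace ℤ (𝓞 L) ((φ x : 𝓞 L) * (φ y : 𝓞 L)) =
        Algebra.trace ℤ (𝓞 K) ((x : 𝓞 K) * (y : 𝓞 K)))
    (γK : 𝓞 K) (hγK : Algebra.trace ℤ (𝓞 K) γK = 1)
    (γ0 : LinearMap.ker (Algebra.trace ℤ (𝓞 K)))
    (hγ0 : (γ0 : 𝓞 K) = 1 - n • γK) :
    ((∃ ψ : 𝓞 K ≃ₗ[ℤ] 𝓞 L, ψ 1 = 1 ∧
        (∀ x : LinearMap.ker (Algebra.trace ℤ (𝓞 K)), ψ (x : 𝓞 K) = (φ x : 𝓞 L))) ↔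
      (∃ z : 𝓞 L, (φ γ0 : 𝓞 L) - 1 = n • z)) ∧
    ((∃ ψ : 𝓞 K ≃ₗ[ℤ] 𝓞 L, ψ 1 = -1 ∧
        (∀ x : LinearMap.ker (Algebra.trace ℤ (𝓞 K)), ψ (x : 𝓞 K) = (φ x : 𝓞 L))) ↔
      (∃ z : 𝓞 L, (φ γ0 : 𝓞 L) + 1 = n • z)) := by
  have hn : 0 < n := by rw [← hdegK]; exact Module.finrank_pos
  have hnz : (n : ℤ) ≠ 0 := by exact_mod_cast hn.ne'
  have htr1K : Algebra.trace ℤ (𝓞 K) 1 = (n : ℤ) := by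
    rw [show (1 : 𝓞 K) = algebraMap ℤ (𝓞 K) 1 from (map_one _).symm,
      Algebra.trace_algebraMap]
    simp [NumberField.RingOfIntegers.rank, hdegK]
  have htr1L : Algebra.trace ℤ (𝓞 L) 1 = (n : ℤ) := by
    rw [show (1 : 𝓞 L) = algebraMap ℤ (𝓞 L) 1 from (map_one _).symm,
      Algebra.trace_algebraMap]
    simp [NumberField.RingOfIntegers.rank, hdegL]
  have hone : (1 : 𝓞 K) = (γ0 : 𝓞 K) + n • γK := by rw [hγ0]; abel
  have hp1 : ∀ h, kerProj γK 1 hγK h 1 = γ0 := by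
    intro h
    refine Subtype.ext ?_
    rw [kerProj_apply, one_mul, htr1K, hγ0, Nat.cast_smul_eq_nsmul]
  have hpx : ∀ h (x : LinearMap.ker (Algebra.trace ℤ (𝓞 K))),
      kerProj γK 1 hγK h (x : 𝓞 K) = x := by
    intro h x
    refine Subtype.ext ?_
    rw [kerProj_apply, LinearMap.mem_ker.mp x.2, mul_zero, zero_smul, sub_zero]
  constructor
  · constructor
    · rintro ⟨ψ, hψ1, hψa⟩
      refine ⟨-(ψ γK), ?_⟩
      have key : (φ γ0 : 𝓞 L) + n • ψ γK = 1 := by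
        rw [← hψa γ0, ← map_nsmul, ← map_add, ← hone, hψ1]
      rw [← key]
      module
    · rintro ⟨z, hz⟩
      have e1 : ((n : ℤ)) • (-z) = 1 - (φ γ0 : 𝓞 L) := by
        rw [Nat.cast_smul_eq_nsmul, smul_neg, ← hz]; ring
      have e2 : (n : ℤ) * Algebra.trace ℤ (𝓞 L) (-z) = (n : ℤ) * 1 := by
        rw [mul_one, ← smul_eq_mul, ← map_smul, e1, map_sub, htr1L,
          LinearMap.mem_ker.mp (φ γ0).2, sub_zero]
      have hγLtr : Algebra.trace ℤ (𝓞 L) (-z) = 1 := mul_left_cancel₀ hnz e2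
      obtain ⟨ψ, hψ⟩ := exists_ext φ γK hγK (-z) 1 (by norm_num) hγLtr
      refine ⟨ψ, ?_, ?_⟩
      · rw [hψ 1, htr1K, hp1, e1]; ring
      · intro x
        rw [hψ, hpx, LinearMap.mem_ker.mp x.2, zero_smul, zero_add]
  · constructor
    · rintro ⟨ψ, hψ1, hψa⟩
      refine ⟨-(ψ γK), ?_⟩
      have key : (φ γ0 : 𝓞 L) + n • ψ γK = -1 := by
        rw [← hψa γ0, ← map_nsmul, ← map_add, ← hone, hψ1]
      have key2 : (φ γ0 : 𝓞 L) = -1 - n • ψ γK := by rw [← key]; abel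
      rw [key2]
      module
    · rintro ⟨z, hz⟩
      have e1 : ((n : ℤ)) • (-z) = -1 - (φ γ0 : 𝓞 L) := by
        rw [Nat.cast_smul_eq_nsmul, smul_neg, ← hz]; ring
      have e2 : (n : ℤ) * Algebra.trace ℤ (𝓞 L) (-z) = (n : ℤ) * (-1) := by
        rw [← smul_eq_mul, ← map_smul, e1, map_sub, map_neg, htr1L,
          LinearMap.mem_ker.mp (φ γ0).2, sub_zero]
        ring
      have hγLtr : Algebra.trace ℤ (𝓞 L) (-z) = -1 := mul_left_cancel₀ hnz e2
      obtain ⟨ψ, hψ⟩ := exists_ext φ γK hγK (-z) (-1) (by norm_num) hγLtr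
      refine ⟨ψ, ?_, ?_⟩
      · rw [hψ 1, htr1K, hp1, e1]; ring
      · intro x
        rw [hψ, hpx, LinearMap.mem_ker.mp x.2, zero_smul, zero_add]
end
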